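/- arXiv:1808.04069 — 8 statements merged into one kernel-verified Lean document; each statement's English description precedes it below -/
import Mathlib

section
/- There exists a constant C > 0, depending only on the L^1-norm of K_1 and on the suprema of D_r and D_b over M̄, such that for all pairs (r_1, b_1), (r_2, b_2) ∈ M̄ one has ‖F(r_1,b_1) − F(r_2,b_2)‖_{L^∞(T^N)^2} ≤ C (‖r_1 − r_2‖_{L^∞(T^N)} + ‖b_1 − b_2‖_{L^∞(T^N)}); that is, F is Lipschitz continuous on M̄ with respect to the L^∞ norm. -/
open MeasureTheory Filter Set
open scoped ENNReal Topology

noncomputable section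

/-! Functions on the torus `T^N` are modelled as `ℤ^N`-periodic functions on `ℝ^N`;
convolution with a kernel `K₁ : ℝ^N → ℝ` over all of `ℝ^N` is then exactly convolution
against the periodization of `K₁` on the torus. -/

/-- `u : ℝ^N → ℝ` represents a function on the torus `T^N`: it is `ℤ^N`-periodic. -/
def IsPeriodic {N : ℕ} (u : (Fin N → ℝ) → ℝ) : Prop :=
  ∀ (x : Fin N → ℝ) (m : Fin N → ℤ), u (x + fun i => (m i : ℝ)) = u x

/-- The set `M̄` of pairs of (torus) densities `(r, b)` with `0 ≤ r`, `0 ≤ b`,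
`r + b ≤ 1` a.e. (membership in `L²(T^N)` follows from measurability and boundedness). -/
def MBar (N : ℕ) : Set (((Fin N → ℝ) → ℝ) × ((Fin N → ℝ) → ℝ)) :=
  {p | Measurable p.1 ∧ Measurable p.2 ∧ IsPeriodic p.1 ∧ IsPeriodic p.2 ∧
    (∀ᵐ x ∂volume, 0 ≤ p.1 x) ∧ (∀ᵐ x ∂volume, 0 ≤ p.2 x) ∧
    ∀ᵐ x ∂volume, p.1 x + p.2 x ≤ 1}

/-- The diffusivity `D_r(p,q) = C_r e^{-C_rr p + C_rb q}`. -/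
def Dr (C_r C_rr C_rb p q : ℝ) : ℝ := C_r * Real.exp (-C_rr * p + C_rb * q)

/-- The diffusivity `D_b(p,q) = C_b e^{C_br p - C_bb q}`. -/
def Db (C_b C_br C_bb p q : ℝ) : ℝ := C_b * Real.exp (C_br * p - C_bb * q)

/-- Convolution `(K * u)(x) = ∫_{ℝ^N} K(x - y) u(y) dy`; for `ℤ^N`-periodic `u` this is
convolution on the torus against the periodization of `K`. -/
def conv {N : ℕ} (K u : (Fin N → ℝ) → ℝ) (x : Fin N → ℝ) : ℝ :=
  ∫ y, K (x - y) * u y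

/-- First component of the vector field:
`F_r(r,b) = (1-ρ) K₁*(D_r(r,b) r) - D_r(r,b) r K₁*(1-ρ)`, `ρ = r + b`. -/
def Fr {N : ℕ} (K₁ : (Fin N → ℝ) → ℝ) (C_r C_rr C_rb : ℝ)
    (r b : (Fin N → ℝ) → ℝ) (x : Fin N → ℝ) : ℝ :=
  (1 - (r x + b x)) * conv K₁ (fun y => Dr C_r C_rr C_rb (r y) (b y) * r y) x
    - Dr C_r C_rr C_rb (r x) (b x) * r x * conv K₁ (fun y => 1 - (r y + b y)) x

/-- Second component of the vector field:
`F_b(r,b) = (1-ρ) K₁*(D_b(r,b) b) - D_b(r,b) b K₁*(1-ρ)`, `ρ = r + b`. -/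
def Fb {N : ℕ} (K₁ : (Fin N → ℝ) → ℝ) (C_b C_br C_bb : ℝ)
    (r b : (Fin N → ℝ) → ℝ) (x : Fin N → ℝ) : ℝ :=
  (1 - (r x + b x)) * conv K₁ (fun y => Db C_b C_br C_bb (r y) (b y) * b y) x
    - Db C_b C_br C_bb (r x) (b x) * b x * conv K₁ (fun y => 1 - (r y + b y)) x

/-- An admissible kernel: `K ∈ W^{1,1}(ℝ^N)`, positive, radially symmetric with
nonincreasing profile, and at most Coulomb-singular at the origin. -/
structure IsAdmissibleKernel (N : ℕ) (K : (Fin N → ℝ) → ℝ) : Prop where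
  integrable : Integrable K volume
  grad_integrable : Integrable (fun x => ‖fderiv ℝ K x‖) volume
  pos : ∀ x, 0 < K x
  radial : ∃ k : ℝ → ℝ, (∀ x, K x = k (Real.sqrt (∑ i, x i ^ 2))) ∧ AntitoneOn k (Set.Ici 0)
  coulomb : ∃ C > (0 : ℝ), ∀ x : Fin N → ℝ, x ≠ 0 → Real.sqrt (∑ i, x i ^ 2) ≤ 1 →
    K x ≤ C * Real.sqrt (∑ i, x i ^ 2) ^ (2 - (N : ℝ))


/-! ### Auxiliary lemmas -/

private lemma exp_diff_le' {a b : ℝ} (h : b ≤ a) :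
    Real.exp a - Real.exp b ≤ Real.exp a * (a - b) := by
  have h1 : 1 - Real.exp (b - a) ≤ a - b := by
    have := Real.add_one_le_exp (b - a); linarith
  have h2 : Real.exp b = Real.exp a * Real.exp (b - a) := by
    rw [← Real.exp_add]; ring_nf
  calc Real.exp a - Real.exp b = Real.exp a * (1 - Real.exp (b - a)) := by rw [h2]; ring
    _ ≤ Real.exp a * (a - b) := mul_le_mul_of_nonneg_left h1 (Real.exp_pos a).le

private lemma oneD' {a s t : ℝ} (ha : 0 ≤ a) (hs : 0 ≤ s) (hst : s ≤ t) :
    |t * Real.exp (-(a * t)) - s * Real.exp (-(a * s))| ≤ 2 * (t - s) := by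
  have h1 : Real.exp (-(a * t)) ≤ 1 := Real.exp_le_one_iff.2 (by nlinarith)
  have h2 : Real.exp (-(a * s)) ≤ 1 := Real.exp_le_one_iff.2 (by nlinarith)
  have hle : -(a * t) ≤ -(a * s) := by nlinarith
  have h3 : Real.exp (-(a * s)) - Real.exp (-(a * t)) ≤
      Real.exp (-(a * s)) * (a * t - a * s) := by
    have := exp_diff_le' hle
    nlinarith
  have h4 : s * (a * Real.exp (-(a * s))) ≤ 1 := by
    have hx : a * s ≤ Real.exp (a * s) := (Real.add_one_le_exp (a * s)).trans' (by linarith)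
    have hmul : Real.exp (-(a * s)) * Real.exp (a * s) = 1 := by
      rw [← Real.exp_add]; simp
    nlinarith [Real.exp_pos (-(a * s)), Real.exp_pos (a * s)]
  have hA : 0 ≤ Real.exp (-(a * t)) * (t - s) :=
    mul_nonneg (Real.exp_pos _).le (by linarith)
  have hA' : Real.exp (-(a * t)) * (t - s) ≤ t - s := by nlinarith
  have hB : 0 ≤ s * (Real.exp (-(a * s)) - Real.exp (-(a * t))) := by
    have := Real.exp_le_exp.2 hle
    nlinarith
  have hB' : s * (Real.exp (-(a * s)) - Real.exp (-(a * t))) ≤ t - s := by nlinarith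
  have key : t * Real.exp (-(a * t)) - s * Real.exp (-(a * s)) =
      Real.exp (-(a * t)) * (t - s) - s * (Real.exp (-(a * s)) - Real.exp (-(a * t))) := by ring
  rw [key, abs_le]
  constructor <;> nlinarith

private lemma oneD {a s t : ℝ} (ha : 0 ≤ a) (hs : 0 ≤ s) (ht : 0 ≤ t) :
    |t * Real.exp (-(a * t)) - s * Real.exp (-(a * s))| ≤ 2 * |t - s| := by
  rcases le_total s t with h | h
  · rw [show |t - s| = t - s from abs_of_nonneg (by linarith)]; exact oneD' ha hs h
  · rw [show |t - s| = s - t from by rw [abs_sub_comm]; exact abs_of_nonneg (by linarith),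
      abs_sub_comm]
    exact oneD' ha ht h

private lemma G_lip_aux {C A B p₁ q₁ p₂ q₂ : ℝ} (hC : 0 ≤ C) (hA : 0 ≤ A) (hB : 0 ≤ B)
    (hp₁ : 0 ≤ p₁) (hq₁ : 0 ≤ q₁) (h1 : p₁ + q₁ ≤ 1)
    (hp₂ : 0 ≤ p₂) (hq₂ : 0 ≤ q₂) (h2 : p₂ + q₂ ≤ 1) (hq : q₁ ≤ q₂) :
    |C * Real.exp (-A * p₁ + B * q₁) * p₁ - C * Real.exp (-A * p₂ + B * q₂) * p₂|
      ≤ 2 * (C * Real.exp B) * (|p₁ - p₂| + |q₁ - q₂|) := by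
  have hq₁1 : q₁ ≤ 1 := by linarith
  have hq₂1 : q₂ ≤ 1 := by linarith
  have e1 : ∀ p q : ℝ, Real.exp (-A * p + B * q) = Real.exp (B * q) * Real.exp (-(A * p)) := by
    intro p q; rw [← Real.exp_add]; ring_nf
  have step1 : |C * Real.exp (-A * p₁ + B * q₁) * p₁ - C * Real.exp (-A * p₂ + B * q₁) * p₂|
      ≤ 2 * (C * Real.exp B) * |p₁ - p₂| := by
    have heq : C * Real.exp (-A * p₁ + B * q₁) * p₁ - C * Real.exp (-A * p₂ + B * q₁) * p₂
        = C * Real.exp (B * q₁) *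
          (p₁ * Real.exp (-(A * p₁)) - p₂ * Real.exp (-(A * p₂))) := by
      rw [e1, e1]; ring
    rw [heq, abs_mul]
    have hb : |C * Real.exp (B * q₁)| ≤ C * Real.exp B := by
      rw [abs_of_nonneg (by positivity)]
      exact mul_le_mul_of_nonneg_left (Real.exp_le_exp.2 (by nlinarith)) hC
    calc |C * Real.exp (B * q₁)| * |p₁ * Real.exp (-(A * p₁)) - p₂ * Real.exp (-(A * p₂))|
        ≤ (C * Real.exp B) * (2 * |p₁ - p₂|) :=
          mul_le_mul hb (oneD hA hp₂ hp₁) (abs_nonneg _) (by positivity)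
      _ = 2 * (C * Real.exp B) * |p₁ - p₂| := by ring
  have step2 : |C * Real.exp (-A * p₂ + B * q₁) * p₂ - C * Real.exp (-A * p₂ + B * q₂) * p₂|
      ≤ (C * Real.exp B) * |q₁ - q₂| := by
    have heq : C * Real.exp (-A * p₂ + B * q₁) * p₂ - C * Real.exp (-A * p₂ + B * q₂) * p₂
        = -(C * p₂ * Real.exp (-(A * p₂)) * (Real.exp (B * q₂) - Real.exp (B * q₁))) := by
      rw [e1, e1]; ring
    have hd : Real.exp (B * q₂) - Real.exp (B * q₁) ≤ Real.exp (B * q₂) * (B * q₂ - B * q₁) :=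
      exp_diff_le' (by nlinarith)
    have hd0 : 0 ≤ Real.exp (B * q₂) - Real.exp (B * q₁) :=
      sub_nonneg.2 (Real.exp_le_exp.2 (by nlinarith))
    have hkey : p₂ * (B * Real.exp (B * q₂)) ≤ Real.exp B := by
      have h5 : B * (1 - q₂) ≤ Real.exp (B * (1 - q₂)) := by
        have := Real.add_one_le_exp (B * (1 - q₂)); linarith
      have h6 : p₂ * B ≤ B * (1 - q₂) := by nlinarith
      have h7 : Real.exp (B * (1 - q₂)) * Real.exp (B * q₂) = Real.exp B := by
        rw [← Real.exp_add]; ring_nf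
      nlinarith [Real.exp_pos (B * q₂), Real.exp_pos (B * (1 - q₂))]
    rw [heq, abs_neg, abs_of_nonneg (by positivity : (0:ℝ) ≤ C * p₂ * Real.exp (-(A * p₂)) * _),
      show |q₁ - q₂| = q₂ - q₁ from by rw [abs_sub_comm]; exact abs_of_nonneg (by linarith)]
    have hexp1 : Real.exp (-(A * p₂)) ≤ 1 := Real.exp_le_one_iff.2 (by nlinarith)
    have c0 : 0 ≤ C * p₂ := mul_nonneg hC hp₂
    have s1 : C * p₂ * Real.exp (-(A * p₂)) ≤ C * p₂ := by
      have := mul_le_mul_of_nonneg_left hexp1 c0; linarith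
    calc C * p₂ * Real.exp (-(A * p₂)) * (Real.exp (B * q₂) - Real.exp (B * q₁))
        ≤ C * p₂ * (Real.exp (B * q₂) - Real.exp (B * q₁)) :=
          mul_le_mul_of_nonneg_right s1 hd0
      _ ≤ C * p₂ * (Real.exp (B * q₂) * (B * q₂ - B * q₁)) :=
          mul_le_mul_of_nonneg_left hd c0
      _ = C * (p₂ * (B * Real.exp (B * q₂))) * (q₂ - q₁) := by ring
      _ ≤ C * Real.exp B * (q₂ - q₁) :=
          mul_le_mul_of_nonneg_right (mul_le_mul_of_nonneg_left hkey hC)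
            (sub_nonneg.2 hq)
  have tri := abs_sub_le (C * Real.exp (-A * p₁ + B * q₁) * p₁)
      (C * Real.exp (-A * p₂ + B * q₁) * p₂) (C * Real.exp (-A * p₂ + B * q₂) * p₂)
  have hM : 0 ≤ C * Real.exp B := by positivity
  have := abs_nonneg (q₁ - q₂)
  have := abs_nonneg (p₁ - p₂)
  nlinarith

private lemma G_lip {C A B p₁ q₁ p₂ q₂ : ℝ} (hC : 0 ≤ C) (hA : 0 ≤ A) (hB : 0 ≤ B)
    (hp₁ : 0 ≤ p₁) (hq₁ : 0 ≤ q₁) (h1 : p₁ + q₁ ≤ 1)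
    (hp₂ : 0 ≤ p₂) (hq₂ : 0 ≤ q₂) (h2 : p₂ + q₂ ≤ 1) :
    |C * Real.exp (-A * p₁ + B * q₁) * p₁ - C * Real.exp (-A * p₂ + B * q₂) * p₂|
      ≤ 2 * (C * Real.exp B) * (|p₁ - p₂| + |q₁ - q₂|) := by
  rcases le_total q₁ q₂ with h | h
  · exact G_lip_aux hC hA hB hp₁ hq₁ h1 hp₂ hq₂ h2 h
  · have := G_lip_aux hC hA hB hp₂ hq₂ h2 hp₁ hq₁ h1 h
    rw [abs_sub_comm, abs_sub_comm p₂ p₁, abs_sub_comm q₂ q₁] at this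
    exact this

private lemma integrable_kernel_mul {N : ℕ} {K h : (Fin N → ℝ) → ℝ} (hK : Integrable K volume)
    (hh : Measurable h) {B : ℝ} (hB : ∀ᵐ y ∂volume, |h y| ≤ B) (x : Fin N → ℝ) :
    Integrable (fun y => K (x - y) * h y) volume := by
  have hKx : Integrable (fun y => K (x - y)) volume := hK.comp_sub_left x
  refine Integrable.mono' (hKx.abs.mul_const B)
    (hKx.aestronglyMeasurable.mul hh.aestronglyMeasurable) ?_
  filter_upwards [hB] with y hy
  rw [Real.norm_eq_abs, abs_mul]
  exact mul_le_mul_of_nonneg_left hy (abs_nonneg _)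

private lemma conv_bound {N : ℕ} {K h : (Fin N → ℝ) → ℝ} (hK : Integrable K volume)
    {B : ℝ} (hB : ∀ᵐ y ∂volume, |h y| ≤ B) (x : Fin N → ℝ) :
    |conv K h x| ≤ (∫ z, |K z|) * B := by
  have hKx : Integrable (fun y => K (x - y)) volume := hK.comp_sub_left x
  calc |conv K h x| ≤ ∫ y, |K (x - y)| * B := by
        rw [conv, ← Real.norm_eq_abs]
        refine norm_integral_le_of_norm_le (hKx.abs.mul_const B) ?_
        filter_upwards [hB] with y hy
        rw [Real.norm_eq_abs, abs_mul]
        exact mul_le_mul_of_nonneg_left hy (abs_nonneg _)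
    _ = (∫ z, |K z|) * B := by
        rw [integral_mul_const]
        congr 1
        exact integral_sub_left_eq_self (fun z => |K z|) volume x

private lemma conv_sub_bound {N : ℕ} {K h₁ h₂ : (Fin N → ℝ) → ℝ} (hK : Integrable K volume)
    (hm₁ : Measurable h₁) (hm₂ : Measurable h₂) {B₁ B₂ B : ℝ}
    (hb₁ : ∀ᵐ y ∂volume, |h₁ y| ≤ B₁) (hb₂ : ∀ᵐ y ∂volume, |h₂ y| ≤ B₂)
    (hd : ∀ᵐ y ∂volume, |h₁ y - h₂ y| ≤ B) (x : Fin N → ℝ) :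
    |conv K h₁ x - conv K h₂ x| ≤ (∫ z, |K z|) * B := by
  have i₁ := integrable_kernel_mul hK hm₁ hb₁ x
  have i₂ := integrable_kernel_mul hK hm₂ hb₂ x
  have heq : conv K h₁ x - conv K h₂ x = conv K (fun y => h₁ y - h₂ y) x := by
    rw [conv, conv, conv, ← integral_sub i₁ i₂]
    congr 1; ext y; ring
  rw [heq]
  exact conv_bound hK hd x

private lemma eLpNorm_top_le {N : ℕ} {f : (Fin N → ℝ) → ℝ} {c : ℝ}
    (h : ∀ᵐ x ∂volume, |f x| ≤ c) : eLpNorm f ⊤ volume ≤ ENNReal.ofReal c := by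
  rw [eLpNorm_exponent_top]
  exact eLpNormEssSup_le_of_ae_bound (by simpa [Real.norm_eq_abs] using h)

private lemma ae_abs_le_toReal {N : ℕ} {f : (Fin N → ℝ) → ℝ}
    (hfin : eLpNorm f ⊤ volume ≠ ∞) :
    ∀ᵐ x ∂volume, |f x| ≤ (eLpNorm f ⊤ volume).toReal := by
  filter_upwards [ae_le_eLpNormEssSup (f := f) (μ := volume)] with x hx
  rw [eLpNorm_exponent_top]
  have h2 := ENNReal.toReal_mono (by rwa [eLpNorm_exponent_top] at hfin) hx
  simpa [Real.norm_eq_abs] using h2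

private lemma sSup_Dr {C_r C_rr C_rb : ℝ} (h1 : 0 < C_r) (h2 : 0 < C_rr) (h3 : 0 < C_rb) :
    sSup {d : ℝ | ∃ p q : ℝ, 0 ≤ p ∧ 0 ≤ q ∧ p + q ≤ 1 ∧ d = Dr C_r C_rr C_rb p q}
      = C_r * Real.exp C_rb := by
  apply IsGreatest.csSup_eq
  constructor
  · exact ⟨0, 1, le_refl 0, zero_le_one, by norm_num, by rw [Dr]; norm_num⟩
  · rintro d ⟨p, q, hp, hq, hpq, rfl⟩
    have hq1 : q ≤ 1 := by linarith
    have hexp : -C_rr * p + C_rb * q ≤ C_rb := by nlinarith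
    exact mul_le_mul_of_nonneg_left (Real.exp_le_exp.2 hexp) h1.le

private lemma sSup_Db {C_b C_br C_bb : ℝ} (h1 : 0 < C_b) (h2 : 0 < C_br) (h3 : 0 < C_bb) :
    sSup {d : ℝ | ∃ p q : ℝ, 0 ≤ p ∧ 0 ≤ q ∧ p + q ≤ 1 ∧ d = Db C_b C_br C_bb p q}
      = C_b * Real.exp C_br := by
  apply IsGreatest.csSup_eq
  constructor
  · exact ⟨1, 0, zero_le_one, le_refl 0, by norm_num, by rw [Db]; norm_num⟩
  · rintro d ⟨p, q, hp, hq, hpq, rfl⟩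
    have hp1 : p ≤ 1 := by linarith
    have hexp : C_br * p - C_bb * q ≤ C_br := by nlinarith
    exact mul_le_mul_of_nonneg_left (Real.exp_le_exp.2 hexp) h1.le

private lemma component_bound {N : ℕ} {K : (Fin N → ℝ) → ℝ} (hK : Integrable K volume)
    {r₁ b₁ r₂ b₂ G₁ G₂ : (Fin N → ℝ) → ℝ}
    (hr₁ : Measurable r₁) (hb₁ : Measurable b₁) (hr₂ : Measurable r₂) (hb₂ : Measurable b₂)
    (hG₁ : Measurable G₁) (hG₂ : Measurable G₂)
    {M ε : ℝ} (hM : 0 ≤ M) (hε : 0 ≤ ε)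
    (haG₁ : ∀ᵐ y ∂volume, |G₁ y| ≤ M) (haG₂ : ∀ᵐ y ∂volume, |G₂ y| ≤ M)
    (haGd : ∀ᵐ y ∂volume, |G₁ y - G₂ y| ≤ 2 * M * ε)
    (haρ₁ : ∀ᵐ y ∂volume, |1 - (r₁ y + b₁ y)| ≤ 1)
    (haρ₂ : ∀ᵐ y ∂volume, |1 - (r₂ y + b₂ y)| ≤ 1)
    (haρd : ∀ᵐ y ∂volume, |(r₁ y + b₁ y) - (r₂ y + b₂ y)| ≤ ε) :
    ∀ᵐ x ∂volume,
      |((1 - (r₁ x + b₁ x)) * conv K G₁ x - G₁ x * conv K (fun y => 1 - (r₁ y + b₁ y)) x)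
        - ((1 - (r₂ x + b₂ x)) * conv K G₂ x - G₂ x * conv K (fun y => 1 - (r₂ y + b₂ y)) x)|
        ≤ 6 * ((∫ z, |K z|) * M) * ε := by
  set k := ∫ z, |K z| with hk_def
  have hk : 0 ≤ k := integral_nonneg fun z => abs_nonneg _
  have hρm₁ : Measurable fun y => 1 - (r₁ y + b₁ y) := measurable_const.sub (hr₁.add hb₁)
  have hρm₂ : Measurable fun y => 1 - (r₂ y + b₂ y) := measurable_const.sub (hr₂.add hb₂)
  have haρd' : ∀ᵐ y ∂volume, |(1 - (r₁ y + b₁ y)) - (1 - (r₂ y + b₂ y))| ≤ ε := by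
    filter_upwards [haρd] with y hy
    have : (1 - (r₁ y + b₁ y)) - (1 - (r₂ y + b₂ y)) = -((r₁ y + b₁ y) - (r₂ y + b₂ y)) := by
      ring
    rw [this, abs_neg]; exact hy
  filter_upwards [haG₁, haG₂, haGd, haρ₁, haρ₂, haρd] with x hxG₁ hxG₂ hxGd hxρ₁ hxρ₂ hxρd
  have hC1 : |conv K G₁ x - conv K G₂ x| ≤ k * (2 * M * ε) :=
    conv_sub_bound hK hG₁ hG₂ haG₁ haG₂ haGd x
  have hC2 : |conv K G₂ x| ≤ k * M := conv_bound hK haG₂ x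
  have hD1 : |conv K (fun y => 1 - (r₁ y + b₁ y)) x| ≤ k * 1 := conv_bound hK haρ₁ x
  have hDd : |conv K (fun y => 1 - (r₁ y + b₁ y)) x - conv K (fun y => 1 - (r₂ y + b₂ y)) x|
      ≤ k * ε := conv_sub_bound hK hρm₁ hρm₂ haρ₁ haρ₂ haρd' x
  set C₁ := conv K G₁ x
  set C₂ := conv K G₂ x
  set D₁ := conv K (fun y => 1 - (r₁ y + b₁ y)) x
  set D₂ := conv K (fun y => 1 - (r₂ y + b₂ y)) x
  have key : ((1 - (r₁ x + b₁ x)) * C₁ - G₁ x * D₁) - ((1 - (r₂ x + b₂ x)) * C₂ - G₂ x * D₂)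
      = (1 - (r₁ x + b₁ x)) * (C₁ - C₂) + ((r₂ x + b₂ x) - (r₁ x + b₁ x)) * C₂
        + (G₂ x - G₁ x) * D₁ + G₂ x * (D₂ - D₁) := by ring
  rw [key]
  have t1 : |(1 - (r₁ x + b₁ x)) * (C₁ - C₂)| ≤ 1 * (k * (2 * M * ε)) := by
    rw [abs_mul]
    exact mul_le_mul hxρ₁ hC1 (abs_nonneg _) zero_le_one
  have t2 : |((r₂ x + b₂ x) - (r₁ x + b₁ x)) * C₂| ≤ ε * (k * M) := by
    rw [abs_mul, abs_sub_comm]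
    exact mul_le_mul hxρd hC2 (abs_nonneg _) hε
  have t3 : |(G₂ x - G₁ x) * D₁| ≤ (2 * M * ε) * (k * 1) := by
    rw [abs_mul, abs_sub_comm]
    exact mul_le_mul hxGd hD1 (abs_nonneg _)
      (mul_nonneg (mul_nonneg (by norm_num) hM) hε)
  have t4 : |G₂ x * (D₂ - D₁)| ≤ M * (k * ε) := by
    rw [abs_mul, abs_sub_comm]
    exact mul_le_mul hxG₂ hDd (abs_nonneg _) hM
  calc |(1 - (r₁ x + b₁ x)) * (C₁ - C₂) + ((r₂ x + b₂ x) - (r₁ x + b₁ x)) * C₂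
        + (G₂ x - G₁ x) * D₁ + G₂ x * (D₂ - D₁)|
      ≤ |(1 - (r₁ x + b₁ x)) * (C₁ - C₂) + ((r₂ x + b₂ x) - (r₁ x + b₁ x)) * C₂
        + (G₂ x - G₁ x) * D₁| + |G₂ x * (D₂ - D₁)| := abs_add_le _ _
    _ ≤ (|(1 - (r₁ x + b₁ x)) * (C₁ - C₂) + ((r₂ x + b₂ x) - (r₁ x + b₁ x)) * C₂|
        + |(G₂ x - G₁ x) * D₁|) + |G₂ x * (D₂ - D₁)| := by
          gcongr; exact abs_add_le _ _
    _ ≤ ((|(1 - (r₁ x + b₁ x)) * (C₁ - C₂)| + |((r₂ x + b₂ x) - (r₁ x + b₁ x)) * C₂|)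
        + |(G₂ x - G₁ x) * D₁|) + |G₂ x * (D₂ - D₁)| := by
          gcongr ?_ + _ + _
          exact abs_add_le _ _
    _ ≤ 6 * (k * M) * ε := by nlinarith [t1, t2, t3, t4]

/-- **Lipschitz continuity of the vector field on `M̄`.** There is a constant `C > 0`,
depending only on the `L¹`-norm of `K₁` and on the suprema of `D_r` and `D_b` over `M̄`
(encoded by the function `Φ` of exactly these three quantities), such that for all pairs
`(r₁, b₁), (r₂, b₂) ∈ M̄`,
`‖F(r₁,b₁) - F(r₂,b₂)‖_{L^∞(T^N)²} ≤ C (‖r₁ - r₂‖_{L^∞} + ‖b₁ - b₂‖_{L^∞})`. -/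

theorem F_lipschitz_on_MBar :
    ∃ Φ : ℝ → ℝ → ℝ → ℝ,
      ∀ (N : ℕ) (K₁ : (Fin N → ℝ) → ℝ) (C_r C_rr C_rb C_b C_br C_bb : ℝ),
        0 < C_r → 0 < C_rr → 0 < C_rb → 0 < C_b → 0 < C_br → 0 < C_bb →
        IsAdmissibleKernel N K₁ →
        -- `C` depends only on the `L¹` norm of `K₁` and the suprema of `D_r, D_b` over `M̄`:
        ∀ C : ℝ,
          C = Φ (∫ x, |K₁ x|)
              (sSup {d : ℝ | ∃ p q : ℝ, 0 ≤ p ∧ 0 ≤ q ∧ p + q ≤ 1 ∧ d = Dr C_r C_rr C_rb p q})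
              (sSup {d : ℝ | ∃ p q : ℝ, 0 ≤ p ∧ 0 ≤ q ∧ p + q ≤ 1 ∧ d = Db C_b C_br C_bb p q}) →
          0 < C ∧
          ∀ r₁ b₁ r₂ b₂ : (Fin N → ℝ) → ℝ, (r₁, b₁) ∈ MBar N → (r₂, b₂) ∈ MBar N →
            eLpNorm (fun x => Fr K₁ C_r C_rr C_rb r₁ b₁ x - Fr K₁ C_r C_rr C_rb r₂ b₂ x)
                ⊤ volume
              ≤ ENNReal.ofReal C *
                (eLpNorm (fun x => r₁ x - r₂ x) ⊤ volume
                  + eLpNorm (fun x => b₁ x - b₂ x) ⊤ volume) ∧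
            eLpNorm (fun x => Fb K₁ C_b C_br C_bb r₁ b₁ x - Fb K₁ C_b C_br C_bb r₂ b₂ x)
                ⊤ volume
              ≤ ENNReal.ofReal C *
                (eLpNorm (fun x => r₁ x - r₂ x) ⊤ volume
                  + eLpNorm (fun x => b₁ x - b₂ x) ⊤ volume) := by
  refine ⟨fun k a b => 6 * k * (a + b) + 1, ?_⟩
  intro N K₁ C_r C_rr C_rb C_b C_br C_bb hCr hCrr hCrb hCb hCbr hCbb hadm C hC
  rw [sSup_Dr hCr hCrr hCrb, sSup_Db hCb hCbr hCbb] at hC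
  dsimp only at hC
  have hk : 0 ≤ ∫ x, |K₁ x| := integral_nonneg fun z => abs_nonneg _
  have hMr : 0 < C_r * Real.exp C_rb := by positivity
  have hMb : 0 < C_b * Real.exp C_br := by positivity
  have hC0 : 0 < C := by
    rw [hC]
    have h1 : 0 ≤ 6 * (∫ x, |K₁ x|) * (C_r * Real.exp C_rb + C_b * Real.exp C_br) :=
      mul_nonneg (mul_nonneg (by norm_num) hk) (by positivity)
    linarith
  refine ⟨hC0, ?_⟩
  intro r₁ b₁ r₂ b₂ hm₁ hm₂
  simp only [MBar, Set.mem_setOf_eq] at hm₁ hm₂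
  obtain ⟨hmr₁, hmb₁, -, -, h0r₁, h0b₁, h1ρ₁⟩ := hm₁
  obtain ⟨hmr₂, hmb₂, -, -, h0r₂, h0b₂, h1ρ₂⟩ := hm₂
  have hbnd_r : ∀ᵐ x ∂(volume : Measure (Fin N → ℝ)), |r₁ x - r₂ x| ≤ 1 := by
    filter_upwards [h0r₁, h0b₁, h1ρ₁, h0r₂, h0b₂, h1ρ₂] with x a1 a2 a3 a4 a5 a6
    rw [abs_le]; constructor <;> linarith
  have hbnd_b : ∀ᵐ x ∂(volume : Measure (Fin N → ℝ)), |b₁ x - b₂ x| ≤ 1 := by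
    filter_upwards [h0r₁, h0b₁, h1ρ₁, h0r₂, h0b₂, h1ρ₂] with x a1 a2 a3 a4 a5 a6
    rw [abs_le]; constructor <;> linarith
  have hfr : eLpNorm (fun x => r₁ x - r₂ x) ⊤ volume ≠ ∞ :=
    ((eLpNorm_top_le hbnd_r).trans_lt ENNReal.ofReal_lt_top).ne
  have hfb : eLpNorm (fun x => b₁ x - b₂ x) ⊤ volume ≠ ∞ :=
    ((eLpNorm_top_le hbnd_b).trans_lt ENNReal.ofReal_lt_top).ne
  set er := (eLpNorm (fun x => r₁ x - r₂ x) ⊤ volume).toReal with her_def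
  set eb := (eLpNorm (fun x => b₁ x - b₂ x) ⊤ volume).toReal with heb_def
  have her : 0 ≤ er := ENNReal.toReal_nonneg
  have heb : 0 ≤ eb := ENNReal.toReal_nonneg
  have hε : 0 ≤ er + eb := add_nonneg her heb
  have haer : ∀ᵐ x ∂(volume : Measure (Fin N → ℝ)), |r₁ x - r₂ x| ≤ er :=
    ae_abs_le_toReal hfr
  have haeb : ∀ᵐ x ∂(volume : Measure (Fin N → ℝ)), |b₁ x - b₂ x| ≤ eb :=
    ae_abs_le_toReal hfb
  have haρ₁ : ∀ᵐ y ∂(volume : Measure (Fin N → ℝ)), |1 - (r₁ y + b₁ y)| ≤ 1 := by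
    filter_upwards [h0r₁, h0b₁, h1ρ₁] with y a1 a2 a3
    rw [abs_le]; constructor <;> linarith
  have haρ₂ : ∀ᵐ y ∂(volume : Measure (Fin N → ℝ)), |1 - (r₂ y + b₂ y)| ≤ 1 := by
    filter_upwards [h0r₂, h0b₂, h1ρ₂] with y a1 a2 a3
    rw [abs_le]; constructor <;> linarith
  have haρd : ∀ᵐ y ∂(volume : Measure (Fin N → ℝ)),
      |(r₁ y + b₁ y) - (r₂ y + b₂ y)| ≤ er + eb := by
    filter_upwards [haer, haeb] with y a1 a2
    calc |(r₁ y + b₁ y) - (r₂ y + b₂ y)| = |(r₁ y - r₂ y) + (b₁ y - b₂ y)| := by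
          congr 1; ring
      _ ≤ |r₁ y - r₂ y| + |b₁ y - b₂ y| := abs_add_le _ _
      _ ≤ er + eb := add_le_add a1 a2
  have hfinal : ∀ d : ℝ, 0 < d →
      d ≤ C_r * Real.exp C_rb + C_b * Real.exp C_br →
      6 * ((∫ z, |K₁ z|) * d) * (er + eb) ≤ C * (er + eb) := by
    intro d hd hdle
    rw [hC]
    nlinarith [mul_nonneg hk hε, mul_nonneg (mul_nonneg hk hd.le) hε,
      mul_nonneg (mul_nonneg hk (sub_nonneg.2 hdle)) hε]
  constructor
  · -- red component
    have hGm₁ : Measurable fun y => Dr C_r C_rr C_rb (r₁ y) (b₁ y) * r₁ y := by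
      simp only [Dr]
      exact ((((hmr₁.const_mul (-C_rr)).add (hmb₁.const_mul C_rb)).exp).const_mul C_r).mul hmr₁
    have hGm₂ : Measurable fun y => Dr C_r C_rr C_rb (r₂ y) (b₂ y) * r₂ y := by
      simp only [Dr]
      exact ((((hmr₂.const_mul (-C_rr)).add (hmb₂.const_mul C_rb)).exp).const_mul C_r).mul hmr₂
    have haG₁ : ∀ᵐ y ∂(volume : Measure (Fin N → ℝ)),
        |Dr C_r C_rr C_rb (r₁ y) (b₁ y) * r₁ y| ≤ C_r * Real.exp C_rb := by
      filter_upwards [h0r₁, h0b₁, h1ρ₁] with y a1 a2 a3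
      have hb1 : b₁ y ≤ 1 := by linarith
      have hr1 : r₁ y ≤ 1 := by linarith
      have hexp : Real.exp (-C_rr * r₁ y + C_rb * b₁ y) ≤ Real.exp C_rb :=
        Real.exp_le_exp.2 (by nlinarith)
      rw [Dr, abs_of_nonneg (by positivity)]
      nlinarith [Real.exp_pos (-C_rr * r₁ y + C_rb * b₁ y),
        mul_le_mul_of_nonneg_left hexp hCr.le]
    have haG₂ : ∀ᵐ y ∂(volume : Measure (Fin N → ℝ)),
        |Dr C_r C_rr C_rb (r₂ y) (b₂ y) * r₂ y| ≤ C_r * Real.exp C_rb := by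
      filter_upwards [h0r₂, h0b₂, h1ρ₂] with y a1 a2 a3
      have hb1 : b₂ y ≤ 1 := by linarith
      have hr1 : r₂ y ≤ 1 := by linarith
      have hexp : Real.exp (-C_rr * r₂ y + C_rb * b₂ y) ≤ Real.exp C_rb :=
        Real.exp_le_exp.2 (by nlinarith)
      rw [Dr, abs_of_nonneg (by positivity)]
      nlinarith [Real.exp_pos (-C_rr * r₂ y + C_rb * b₂ y),
        mul_le_mul_of_nonneg_left hexp hCr.le]
    have haGd : ∀ᵐ y ∂(volume : Measure (Fin N → ℝ)),
        |Dr C_r C_rr C_rb (r₁ y) (b₁ y) * r₁ y - Dr C_r C_rr C_rb (r₂ y) (b₂ y) * r₂ y|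
          ≤ 2 * (C_r * Real.exp C_rb) * (er + eb) := by
      filter_upwards [h0r₁, h0b₁, h1ρ₁, h0r₂, h0b₂, h1ρ₂, haer, haeb]
        with y a1 a2 a3 a4 a5 a6 a7 a8
      have hlip := G_lip hCr.le hCrr.le hCrb.le a1 a2 a3 a4 a5 a6
      simp only [Dr]
      refine hlip.trans ?_
      exact mul_le_mul_of_nonneg_left (add_le_add a7 a8) (by positivity)
    have hcomp := component_bound hadm.integrable hmr₁ hmb₁ hmr₂ hmb₂ hGm₁ hGm₂
      (M := C_r * Real.exp C_rb) (ε := er + eb) hMr.le hε haG₁ haG₂ haGd haρ₁ haρ₂ haρd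
    have hmain : ∀ᵐ x ∂(volume : Measure (Fin N → ℝ)),
        |Fr K₁ C_r C_rr C_rb r₁ b₁ x - Fr K₁ C_r C_rr C_rb r₂ b₂ x| ≤ C * (er + eb) := by
      filter_upwards [hcomp] with x hx
      simp only [Fr]
      exact hx.trans (hfinal (C_r * Real.exp C_rb) hMr (by linarith))
    refine (eLpNorm_top_le hmain).trans ?_
    rw [ENNReal.ofReal_mul hC0.le, ENNReal.ofReal_add her heb, her_def, heb_def,
      ENNReal.ofReal_toReal hfr, ENNReal.ofReal_toReal hfb]
  · -- blue component
    have hDbeq : ∀ p q : ℝ, Db C_b C_br C_bb p q = C_b * Real.exp (-C_bb * q + C_br * p) := by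
      intro p q
      rw [Db, show C_br * p - C_bb * q = -C_bb * q + C_br * p from by ring]
    have hGm₁ : Measurable fun y => Db C_b C_br C_bb (r₁ y) (b₁ y) * b₁ y := by
      simp only [Db]
      exact ((((hmr₁.const_mul C_br).sub (hmb₁.const_mul C_bb)).exp).const_mul C_b).mul hmb₁
    have hGm₂ : Measurable fun y => Db C_b C_br C_bb (r₂ y) (b₂ y) * b₂ y := by
      simp only [Db]
      exact ((((hmr₂.const_mul C_br).sub (hmb₂.const_mul C_bb)).exp).const_mul C_b).mul hmb₂
    have haG₁ : ∀ᵐ y ∂(volume : Measure (Fin N → ℝ)),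
        |Db C_b C_br C_bb (r₁ y) (b₁ y) * b₁ y| ≤ C_b * Real.exp C_br := by
      filter_upwards [h0r₁, h0b₁, h1ρ₁] with y a1 a2 a3
      have hb1 : b₁ y ≤ 1 := by linarith
      have hr1 : r₁ y ≤ 1 := by linarith
      have hexp : Real.exp (C_br * r₁ y - C_bb * b₁ y) ≤ Real.exp C_br :=
        Real.exp_le_exp.2 (by nlinarith)
      rw [Db, abs_of_nonneg (by positivity)]
      nlinarith [Real.exp_pos (C_br * r₁ y - C_bb * b₁ y),
        mul_le_mul_of_nonneg_left hexp hCb.le]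
    have haG₂ : ∀ᵐ y ∂(volume : Measure (Fin N → ℝ)),
        |Db C_b C_br C_bb (r₂ y) (b₂ y) * b₂ y| ≤ C_b * Real.exp C_br := by
      filter_upwards [h0r₂, h0b₂, h1ρ₂] with y a1 a2 a3
      have hb1 : b₂ y ≤ 1 := by linarith
      have hr1 : r₂ y ≤ 1 := by linarith
      have hexp : Real.exp (C_br * r₂ y - C_bb * b₂ y) ≤ Real.exp C_br :=
        Real.exp_le_exp.2 (by nlinarith)
      rw [Db, abs_of_nonneg (by positivity)]
      nlinarith [Real.exp_pos (C_br * r₂ y - C_bb * b₂ y),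
        mul_le_mul_of_nonneg_left hexp hCb.le]
    have haGd : ∀ᵐ y ∂(volume : Measure (Fin N → ℝ)),
        |Db C_b C_br C_bb (r₁ y) (b₁ y) * b₁ y - Db C_b C_br C_bb (r₂ y) (b₂ y) * b₂ y|
          ≤ 2 * (C_b * Real.exp C_br) * (er + eb) := by
      filter_upwards [h0r₁, h0b₁, h1ρ₁, h0r₂, h0b₂, h1ρ₂, haer, haeb]
        with y a1 a2 a3 a4 a5 a6 a7 a8
      have hlip := G_lip hCb.le hCbb.le hCbr.le a2 a1 (by linarith) a5 a4 (by linarith)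
      rw [hDbeq, hDbeq]
      refine hlip.trans ?_
      refine mul_le_mul_of_nonneg_left ?_ (by positivity)
      have := add_le_add a8 a7
      linarith
    have hcomp := component_bound hadm.integrable hmr₁ hmb₁ hmr₂ hmb₂ hGm₁ hGm₂
      (M := C_b * Real.exp C_br) (ε := er + eb) hMb.le hε haG₁ haG₂ haGd haρ₁ haρ₂ haρd
    have hmain : ∀ᵐ x ∂(volume : Measure (Fin N → ℝ)),
        |Fb K₁ C_b C_br C_bb r₁ b₁ x - Fb K₁ C_b C_br C_bb r₂ b₂ x| ≤ C * (er + eb) := by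
      filter_upwards [hcomp] with x hx
      simp only [Fb]
      exact hx.trans (hfinal (C_b * Real.exp C_br) hMb (by linarith))
    refine (eLpNorm_top_le hmain).trans ?_
    rw [ENNReal.ofReal_mul hC0.le, ENNReal.ofReal_add her heb, her_def, heb_def,
      ENNReal.ofReal_toReal hfr, ENNReal.ofReal_toReal hfb]


end
end

section
/- For every (r, b) ∈ M̄ and every ν in the normal cone N(r,b) = { u ∈ L^2(T^N)^2 : ⟨(s,c) − (r,b), u⟩_{L^2} ≤ 0 for all (s,c) ∈ M̄ }, the inner product ⟨F(r,b), ν⟩_{L^2} ≤ 0 holds; i.e. F points into M̄ on its boundary. -/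
open MeasureTheory Filter Set
open scoped ENNReal Topology

noncomputable section

/-- The unit cell `[0,1)^N` of the torus `T^N`, over which torus integrals are taken. -/
def unitBox (N : ℕ) : Set (Fin N → ℝ) := Set.univ.pi fun _ => Set.Ico (0 : ℝ) 1

/-! For `(r, b) ∈ M̄` and a small enough step `ε > 0`, the explicit Euler step
`(r, b) + ε F(r, b)` stays in `M̄`: the loss term of each component is at most
`ε ‖D‖_∞ ‖K₁‖_{L¹}` times the density itself, and the gain terms of both components together are
at most `ε (‖D_r‖_∞ + ‖D_b‖_∞) ‖K₁‖_{L¹}` times the free space `1 - ρ`. Testing the normal cone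
with this step gives `ε ⟨F(r, b), ν⟩ ≤ 0`. -/

def flux {N : ℕ} (K : (Fin N → ℝ) → ℝ) (D : ℝ → ℝ → ℝ) (r b u : (Fin N → ℝ) → ℝ)
    (x : Fin N → ℝ) : ℝ :=
  (1 - (r x + b x)) * conv K (fun y => D (r y) (b y) * u y) x
    - D (r x) (b x) * u x * conv K (fun y => 1 - (r y + b y)) x

lemma Fr_eq_flux {N : ℕ} (K : (Fin N → ℝ) → ℝ) (C_r C_rr C_rb : ℝ) (r b : (Fin N → ℝ) → ℝ) :
    Fr K C_r C_rr C_rb r b = flux K (Dr C_r C_rr C_rb) r b r := rfl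

lemma Fb_eq_flux {N : ℕ} (K : (Fin N → ℝ) → ℝ) (C_b C_br C_bb : ℝ) (r b : (Fin N → ℝ) → ℝ) :
    Fb K C_b C_br C_bb r b = flux K (Db C_b C_br C_bb) r b b := rfl

lemma continuous_Dr (C_r C_rr C_rb : ℝ) : Continuous (Function.uncurry (Dr C_r C_rr C_rb)) := by
  unfold Dr; fun_prop

lemma continuous_Db (C_b C_br C_bb : ℝ) : Continuous (Function.uncurry (Db C_b C_br C_bb)) := by
  unfold Db; fun_prop

lemma Dr_nonneg {C_r : ℝ} (hC_r : 0 ≤ C_r) (C_rr C_rb p q : ℝ) : 0 ≤ Dr C_r C_rr C_rb p q :=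
  mul_nonneg hC_r (Real.exp_pos _).le

lemma Db_nonneg {C_b : ℝ} (hC_b : 0 ≤ C_b) (C_br C_bb p q : ℝ) : 0 ≤ Db C_b C_br C_bb p q :=
  mul_nonneg hC_b (Real.exp_pos _).le

lemma IsCompact.exists_mapsTo_Icc {X : Type*} [TopologicalSpace X] {s : Set X} (hs : IsCompact s)
    {f : X → ℝ} (hf : ContinuousOn f s) (hf0 : ∀ x ∈ s, 0 ≤ f x) : ∃ M, MapsTo f s (Icc 0 M) := by
  obtain ⟨M, hM⟩ := hs.bddAbove_image hf
  exact ⟨M, fun x hx => ⟨hf0 x hx, hM (mem_image_of_mem f hx)⟩⟩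

section Convolution

variable {N : ℕ} {K u : (Fin N → ℝ) → ℝ}

lemma conv_congr_ae_left {K' : (Fin N → ℝ) → ℝ} (h : K =ᵐ[volume] K') (x : Fin N → ℝ) :
    conv K u x = conv K' u x := by
  have hx : (fun y => K (x - y)) =ᵐ[volume] fun y => K' (x - y) :=
    (Measure.measurePreserving_sub_left volume x).quasiMeasurePreserving.ae_eq_comp h
  refine integral_congr_ae ?_
  filter_upwards [hx] with y hy
  rw [hy]

lemma measurable_conv (hK : AEStronglyMeasurable K volume) (hu : Measurable u) :
    Measurable (conv K u) := by
  rw [show conv K u = conv (hK.mk K) u from funext (conv_congr_ae_left hK.ae_eq_mk)]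
  have h : StronglyMeasurable fun p : (Fin N → ℝ) × (Fin N → ℝ) => hK.mk K (p.1 - p.2) * u p.2 :=
    ((hK.stronglyMeasurable_mk.measurable.comp (measurable_fst.sub measurable_snd)).mul
      (hu.comp measurable_snd)).stronglyMeasurable
  exact h.integral_prod_right'.measurable

lemma IsPeriodic.conv (hu : IsPeriodic u) : IsPeriodic (conv K u) := by
  intro x m
  set t : Fin N → ℝ := fun i => (m i : ℝ)
  have ht : ∀ y, u (y + t) = u y := fun y => hu y m
  calc _root_.conv K u (x + t) = ∫ y, K (x + t - (y + t)) * u (y + t) :=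
        (integral_add_right_eq_self (fun y => K (x + t - y) * u y) t).symm
    _ = _root_.conv K u x := by simp only [add_sub_add_right_eq_sub, ht, _root_.conv]

lemma conv_mem_Icc (hK : Integrable K volume) (hK0 : ∀ x, 0 ≤ K x) {M : ℝ}
    (hu : ∀ᵐ y ∂volume, u y ∈ Icc 0 M) (x : Fin N → ℝ) :
    conv K u x ∈ Icc 0 (M * ∫ z, K z) := by
  have hu0 : ∀ᵐ y ∂volume, 0 ≤ K (x - y) * u y := by
    filter_upwards [hu] with y hy using mul_nonneg (hK0 _) hy.1
  refine ⟨integral_nonneg_of_ae hu0, ?_⟩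
  calc conv K u x ≤ ∫ y, M * K (x - y) := by
        refine integral_mono_of_nonneg hu0 ((hK.comp_sub_left x).const_mul M) ?_
        filter_upwards [hu] with y hy
        nlinarith [hK0 (x - y), hy.2]
    _ = M * ∫ z, K z := by rw [integral_const_mul, integral_sub_left_eq_self K volume x]

lemma conv_mul_mem_Icc (hK : Integrable K volume) (hK0 : ∀ x, 0 ≤ K x) {d : (Fin N → ℝ) → ℝ}
    {M : ℝ} (hd : ∀ᵐ y ∂volume, d y ∈ Icc 0 M) (hu : ∀ᵐ y ∂volume, u y ∈ Icc 0 1)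
    (x : Fin N → ℝ) : conv K (fun y => d y * u y) x ∈ Icc 0 (M * ∫ z, K z) := by
  refine conv_mem_Icc hK hK0 ?_ x
  filter_upwards [hd, hu] with y hdy huy
  exact ⟨mul_nonneg hdy.1 huy.1, by nlinarith [hdy.1, hdy.2, huy.1, huy.2]⟩

end Convolution

section Flux

variable {N : ℕ} {K : (Fin N → ℝ) → ℝ} {D : ℝ → ℝ → ℝ} {r b u : (Fin N → ℝ) → ℝ}

lemma measurable_flux (hK : AEStronglyMeasurable K volume) (hD : Measurable (Function.uncurry D))
    (hr : Measurable r) (hb : Measurable b) (hu : Measurable u) :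
    Measurable (flux K D r b u) := by
  have hDrb : Measurable fun y => D (r y) (b y) := hD.comp (hr.prodMk hb)
  have hρ : Measurable fun y => 1 - (r y + b y) := measurable_const.sub (hr.add hb)
  exact (hρ.mul (measurable_conv hK (hDrb.mul hu))).sub
    ((hDrb.mul hu).mul (measurable_conv hK hρ))

lemma IsPeriodic.flux (hr : IsPeriodic r) (hb : IsPeriodic b) (hu : IsPeriodic u) :
    IsPeriodic (flux K D r b u) := by
  have hρ : IsPeriodic fun y => 1 - (r y + b y) := fun y m => by simp only [hr y m, hb y m]
  have hDu : IsPeriodic fun y => D (r y) (b y) * u y := fun y m => by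
    simp only [hr y m, hb y m, hu y m]
  intro x m
  simp only [_root_.flux, hr x m, hb x m, hu x m, hρ.conv x m, hDu.conv x m]

end Flux

lemma euler_step_nonneg {u σ P d R ε M A : ℝ} (hu : 0 ≤ u) (hσ : 0 ≤ σ) (hP : 0 ≤ P)
    (hd : d ∈ Icc 0 M) (hR : R ∈ Icc 0 A) (hε : 0 ≤ ε) (hεMA : ε * (M * A) ≤ 1) :
    0 ≤ u + ε * (σ * P - d * u * R) := by
  have hloss : ε * (d * u * R) ≤ u := by
    calc ε * (d * u * R) ≤ ε * (M * A) * u := by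
          have := mul_le_mul hd.2 hR.2 hR.1 (hd.1.trans hd.2)
          nlinarith [mul_nonneg hε hu]
      _ ≤ u := by nlinarith
  nlinarith [mul_nonneg hε (mul_nonneg hσ hP)]

lemma euler_step_sum_le_one {r b P Q d₁ d₂ R ε : ℝ} (hr : 0 ≤ r) (hb : 0 ≤ b)
    (hrb : r + b ≤ 1) (hd₁ : 0 ≤ d₁) (hd₂ : 0 ≤ d₂) (hR : 0 ≤ R) (hε : 0 ≤ ε)
    (hεPQ : ε * (P + Q) ≤ 1) :
    (r + ε * ((1 - (r + b)) * P - d₁ * r * R)) + (b + ε * ((1 - (r + b)) * Q - d₂ * b * R))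
      ≤ 1 := by
  have hgain : ε * ((1 - (r + b)) * (P + Q)) ≤ 1 - (r + b) := by
    nlinarith [mul_le_mul_of_nonneg_right hεPQ (sub_nonneg.2 hrb)]
  nlinarith [mul_nonneg hε (mul_nonneg (mul_nonneg hd₁ hr) hR),
    mul_nonneg hε (mul_nonneg (mul_nonneg hd₂ hb) hR)]

lemma euler_step_mem_MBar {N : ℕ} {K : (Fin N → ℝ) → ℝ} (hK : Integrable K volume)
    (hK0 : ∀ x, 0 ≤ K x) {D₁ D₂ : ℝ → ℝ → ℝ} (hD₁ : Measurable (Function.uncurry D₁))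
    (hD₂ : Measurable (Function.uncurry D₂)) {M₁ M₂ : ℝ}
    (hD₁M : MapsTo (Function.uncurry D₁) (Icc 0 1 ×ˢ Icc 0 1) (Icc 0 M₁))
    (hD₂M : MapsTo (Function.uncurry D₂) (Icc 0 1 ×ˢ Icc 0 1) (Icc 0 M₂))
    {r b : (Fin N → ℝ) → ℝ} (hrb : (r, b) ∈ MBar N) {ε : ℝ} (hε : 0 ≤ ε)
    (hεM : ε * ((M₁ + M₂) * ∫ z, K z) ≤ 1) :
    ((fun x => r x + ε * flux K D₁ r b r x), (fun x => b x + ε * flux K D₂ r b b x)) ∈ MBar N := by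
  obtain ⟨hrm, hbm, hrp, hbp, hr0, hb0, hrb1⟩ := hrb
  dsimp only at hrm hbm hrp hbp hr0 hb0 hrb1
  set A := ∫ z, K z
  have hA : 0 ≤ A := integral_nonneg hK0
  have h01 : ((0 : ℝ), (0 : ℝ)) ∈ Icc 0 1 ×ˢ Icc 0 1 :=
    ⟨left_mem_Icc.2 zero_le_one, left_mem_Icc.2 zero_le_one⟩
  have hM₁ : 0 ≤ M₁ := nonempty_Icc.1 ⟨_, hD₁M h01⟩
  have hM₂ : 0 ≤ M₂ := nonempty_Icc.1 ⟨_, hD₂M h01⟩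
  have hεM₁ : ε * (M₁ * A) ≤ 1 := by nlinarith [mul_nonneg hε (mul_nonneg hM₂ hA)]
  have hεM₂ : ε * (M₂ * A) ≤ 1 := by nlinarith [mul_nonneg hε (mul_nonneg hM₁ hA)]
  have hunit : ∀ᵐ y ∂volume, r y ∈ Icc (0 : ℝ) 1 ∧ b y ∈ Icc (0 : ℝ) 1 := by
    filter_upwards [hr0, hb0, hrb1] with y h₁ h₂ h₃ using ⟨⟨h₁, by linarith⟩, ⟨h₂, by linarith⟩⟩
  have hd₁ : ∀ᵐ y ∂volume, D₁ (r y) (b y) ∈ Icc 0 M₁ :=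
    hunit.mono fun y hy => hD₁M (x := (r y, b y)) hy
  have hd₂ : ∀ᵐ y ∂volume, D₂ (r y) (b y) ∈ Icc 0 M₂ :=
    hunit.mono fun y hy => hD₂M (x := (r y, b y)) hy
  have hP₁ := conv_mul_mem_Icc hK hK0 hd₁ (hunit.mono fun y hy => hy.1)
  have hP₂ := conv_mul_mem_Icc hK hK0 hd₂ (hunit.mono fun y hy => hy.2)
  have hR : ∀ x, conv K (fun y => 1 - (r y + b y)) x ∈ Icc 0 A := fun x => by
    simpa using conv_mem_Icc (M := 1) hK hK0
      (by filter_upwards [hr0, hb0, hrb1] with y h₁ h₂ h₃ using ⟨by linarith, by linarith⟩) x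
  refine ⟨hrm.add ((measurable_flux hK.1 hD₁ hrm hbm hrm).const_mul ε),
    hbm.add ((measurable_flux hK.1 hD₂ hrm hbm hbm).const_mul ε),
    fun x m => by simp only [hrp x m, hrp.flux hbp hrp x m],
    fun x m => by simp only [hbp x m, hrp.flux hbp hbp x m], ?_, ?_, ?_⟩
  all_goals filter_upwards [hr0, hb0, hrb1, hd₁, hd₂] with x h₁ h₂ h₃ hd₁x hd₂x
  · exact euler_step_nonneg h₁ (by linarith) (hP₁ x).1 hd₁x (hR x) hε hεM₁
  · exact euler_step_nonneg h₂ (by linarith) (hP₂ x).1 hd₂x (hR x) hε hεM₂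
  · exact euler_step_sum_le_one h₁ h₂ h₃ hd₁x.1 hd₂x.1 (hR x).1 hε
      (by nlinarith [(hP₁ x).2, (hP₂ x).2])

theorem F_points_into_MBar_general (N : ℕ) (K₁ : (Fin N → ℝ) → ℝ)
    (C_r C_rr C_rb C_b C_br C_bb : ℝ)
    (hCr : 0 < C_r)
    (hCb : 0 < C_b)
    (hK : IsAdmissibleKernel N K₁)
    (r b : (Fin N → ℝ) → ℝ) (hrb : (r, b) ∈ MBar N)
    (ν₁ ν₂ : (Fin N → ℝ) → ℝ)
    (hcone : ∀ s c : (Fin N → ℝ) → ℝ, (s, c) ∈ MBar N →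
      (∫ x in unitBox N, ((s x - r x) * ν₁ x + (c x - b x) * ν₂ x)) ≤ 0) :
    (∫ x in unitBox N,
        (Fr K₁ C_r C_rr C_rb r b x * ν₁ x + Fb K₁ C_b C_br C_bb r b x * ν₂ x)) ≤ 0 := by
  have hsquare : IsCompact (Icc (0 : ℝ) 1 ×ˢ Icc (0 : ℝ) 1) := isCompact_Icc.prod isCompact_Icc
  obtain ⟨M₁, hM₁⟩ := hsquare.exists_mapsTo_Icc (continuous_Dr C_r C_rr C_rb).continuousOn
    fun p _ => Dr_nonneg hCr.le _ _ _ _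
  obtain ⟨M₂, hM₂⟩ := hsquare.exists_mapsTo_Icc (continuous_Db C_b C_br C_bb).continuousOn
    fun p _ => Db_nonneg hCb.le _ _ _ _
  set L := (M₁ + M₂) * ∫ z, K₁ z
  set ε := 1 / (|L| + 1)
  have hε : 0 < ε := by positivity
  have hεL : ε * L ≤ 1 := by
    rw [one_div_mul_eq_div, div_le_one (by positivity)]
    linarith [le_abs_self L]
  have hstep := euler_step_mem_MBar hK.integrable (fun x => (hK.pos x).le)
    (continuous_Dr C_r C_rr C_rb).measurable (continuous_Db C_b C_br C_bb).measurable hM₁ hM₂ hrb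
    hε.le hεL
  have hεF := hcone _ _ hstep
  simp only [add_sub_cancel_left, ← Fr_eq_flux, ← Fb_eq_flux, mul_assoc, ← mul_add,
    integral_const_mul] at hεF
  exact nonpos_of_mul_nonpos_right hεF hε

/-- **The vector field points into `M̄` on its boundary.** For every `(r, b) ∈ M̄` and every
`ν = (ν₁, ν₂)` in the normal cone
`N(r,b) = {u ∈ L²(T^N)² : ⟨(s,c) - (r,b), u⟩_{L²} ≤ 0 for all (s,c) ∈ M̄}`,
one has `⟨F(r,b), ν⟩_{L²} ≤ 0`. -/
theorem F_points_into_MBar (N : ℕ) (K₁ : (Fin N → ℝ) → ℝ)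
    (C_r C_rr C_rb C_b C_br C_bb : ℝ)
    (hCr : 0 < C_r) (hCrr : 0 < C_rr) (hCrb : 0 < C_rb)
    (hCb : 0 < C_b) (hCbr : 0 < C_br) (hCbb : 0 < C_bb)
    (hK : IsAdmissibleKernel N K₁)
    (r b : (Fin N → ℝ) → ℝ) (hrb : (r, b) ∈ MBar N)
    (ν₁ ν₂ : (Fin N → ℝ) → ℝ)
    (hν₁m : Measurable ν₁) (hν₂m : Measurable ν₂)
    (hν₁p : IsPeriodic ν₁) (hν₂p : IsPeriodic ν₂)
    (hν₁L2 : MemLp ν₁ 2 (volume.restrict (unitBox N)))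
    (hν₂L2 : MemLp ν₂ 2 (volume.restrict (unitBox N)))
    (hcone : ∀ s c : (Fin N → ℝ) → ℝ, (s, c) ∈ MBar N →
      (∫ x in unitBox N, ((s x - r x) * ν₁ x + (c x - b x) * ν₂ x)) ≤ 0) :
    (∫ x in unitBox N,
        (Fr K₁ C_r C_rr C_rb r b x * ν₁ x + Fb K₁ C_b C_br C_bb r b x * ν₂ x)) ≤ 0 :=
  F_points_into_MBar_general N K₁ C_r C_rr C_rb C_b C_br C_bb hCr hCb hK r b hrb ν₁ ν₂ hcone
end
end

section
/- For every (r, b) ∈ M̄ and every even kernel K_1 ∈ L^1, both components of F(r,b) have zero mean: ∫_{T^N} [(1−ρ) K_1*(D_r(r,b) r) − D_r(r,b) r K_1*(1−ρ)] dx = 0 and ∫_{T^N} [(1−ρ) K_1*(D_b(r,b) b) − D_b(r,b) b K_1*(1−ρ)] dx = 0; consequently the integro-differential system conserves the total masses ∫ r dx and ∫ b dx. -/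
open MeasureTheory Filter Set
open scoped ENNReal Topology

noncomputable section

/-! Both components of `F` have the form `f (K₁ * g) - g (K₁ * f)` with `f = 1 - ρ` and `g` a
bounded function of `(r, b)`. For an even kernel, Fubini and the translation invariance of
integrals of periodic functions over the unit cell give `∫ f (K₁ * g) = ∫ g (K₁ * f)`, so the
mean vanishes. Mass conservation then follows by differentiating `∫ r dx` under the integral
sign. The required uniform bound on `∂ₜ r` needs the constraint `(r, b) ∈ M̄` to hold, for a.e.
`x`, at all times simultaneously; by continuity in `t` it suffices to know this at rational
times. -/

open scoped Pointwise

section Torus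

variable {N : ℕ} {u v : (Fin N → ℝ) → ℝ}

instance : IsProbabilityMeasure (volume.restrict (unitBox N)) :=
  ⟨by simp [unitBox, volume_pi_pi, Real.volume_Ico]⟩

theorem isAddFundamentalDomain_unitBox (N : ℕ) :
    IsAddFundamentalDomain (Submodule.span ℤ (Set.range (Pi.basisFun ℝ (Fin N)))).toAddSubgroup
      (unitBox N) volume := by
  convert ZSpan.isAddFundamentalDomain' (Pi.basisFun ℝ (Fin N)) volume
  ext x
  simp [ZSpan.fundamentalDomain, unitBox, Set.mem_pi]

theorem IsPeriodic.comp₂ (φ : ℝ → ℝ → ℝ) (hu : IsPeriodic u) (hv : IsPeriodic v) :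
    IsPeriodic fun x => φ (u x) (v x) := fun x m => by
  simp only [hu x m, hv x m]

theorem IsPeriodic.comp_add_right (hu : IsPeriodic u) (z : Fin N → ℝ) :
    IsPeriodic fun x => u (x + z) := fun x m => by
  simp only [add_right_comm x, hu (x + z) m]

theorem IsPeriodic.map_add_of_mem_span {H : (Fin N → ℝ) → ℝ} (hH : IsPeriodic H)
    {w : Fin N → ℝ} (hw : w ∈ Submodule.span ℤ (Set.range (Pi.basisFun ℝ (Fin N))))
    (x : Fin N → ℝ) : H (w + x) = H x := by
  choose m hm using ((Pi.basisFun ℝ (Fin N)).mem_span_iff_repr_mem ℤ w).1 hw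
  have hw_eq : w = fun i => (m i : ℝ) := funext fun i => (hm i).symm
  rw [add_comm, hw_eq, hH]

theorem IsPeriodic.setIntegral_comp_sub {H : (Fin N → ℝ) → ℝ} (hH : IsPeriodic H)
    (z : Fin N → ℝ) : ∫ x in unitBox N, H (x - z) = ∫ x in unitBox N, H x := by
  have hpre : (fun x => x - z) ⁻¹' ((-z) +ᵥ unitBox N) = unitBox N := by
    ext x; simp [Set.mem_vadd_set_iff_neg_vadd_mem]
  have hchange := (measurePreserving_sub_right volume z).setIntegral_preimage_emb
    (measurableEmbedding_subRight z) H ((-z) +ᵥ unitBox N)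
  rw [hpre] at hchange
  rw [hchange]
  have : Countable (Submodule.span ℤ (Set.range (Pi.basisFun ℝ (Fin N)))).toAddSubgroup :=
    inferInstanceAs (Countable (Submodule.span ℤ _))
  exact ((isAddFundamentalDomain_unitBox N).vadd_of_comm (-z)).setIntegral_eq
    (isAddFundamentalDomain_unitBox N) fun g x => hH.map_add_of_mem_span g.2 x

theorem IsPeriodic.setIntegral_mul_comp_sub (hu : IsPeriodic u) (hv : IsPeriodic v)
    (z : Fin N → ℝ) :
    ∫ x in unitBox N, v x * u (x - z) = ∫ x in unitBox N, u x * v (x + z) := by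
  have hH := (hu.comp₂ (· * ·) (hv.comp_add_right z)).setIntegral_comp_sub z
  simp only [sub_add_cancel] at hH
  simp_rw [← hH, mul_comm (v _)]

end Torus

section Convolution

variable {N : ℕ} {K f g u : (Fin N → ℝ) → ℝ}

theorem conv_eq_integral_mul_comp_sub (K u : (Fin N → ℝ) → ℝ) (x : Fin N → ℝ) :
    conv K u x = ∫ z, K z * u (x - z) := by
  rw [conv, ← integral_sub_left_eq_self (fun y => K (x - y) * u y) volume x]
  simp_rw [sub_sub_cancel]

theorem abs_conv_le (hK : Integrable K volume) {C : ℝ} (hu : ∀ᵐ y ∂volume, |u y| ≤ C)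
    (x : Fin N → ℝ) : |conv K u x| ≤ (∫ z, |K z|) * C := by
  calc |conv K u x| = ‖∫ y, K (x - y) * u y‖ := (Real.norm_eq_abs _).symm
    _ ≤ ∫ y, |K (x - y)| * C := by
        refine norm_integral_le_of_norm_le ((hK.comp_sub_left x).abs.mul_const C) ?_
        filter_upwards [hu] with y hy
        rw [norm_mul, Real.norm_eq_abs, Real.norm_eq_abs]
        exact mul_le_mul_of_nonneg_left hy (abs_nonneg _)
    _ = (∫ z, |K z|) * C := by
        rw [integral_mul_const, integral_sub_left_eq_self (fun y => |K y|)]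

theorem aestronglyMeasurable_conv (hK : Integrable K volume) (hu : Measurable u) :
    AEStronglyMeasurable (conv K u) volume := by
  have hKsub : AEStronglyMeasurable (fun p : (Fin N → ℝ) × (Fin N → ℝ) => K (p.1 - p.2))
      (volume.prod volume) :=
    hK.aestronglyMeasurable.comp_quasiMeasurePreserving
      (Measure.quasiMeasurePreserving_fst.comp
        (measurePreserving_sub_prod volume volume).quasiMeasurePreserving)
  exact (hKsub.mul (hu.comp measurable_snd).aestronglyMeasurable).integral_prod_right'

theorem quasiMeasurePreserving_sub_prod {μ : Measure (Fin N → ℝ)} (hμ : μ ≪ volume) :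
    Measure.QuasiMeasurePreserving (fun p : (Fin N → ℝ) × (Fin N → ℝ) => p.1 - p.2)
      (μ.prod volume) volume :=
  (Measure.quasiMeasurePreserving_fst.comp (measurePreserving_sub_prod
    (volume : Measure (Fin N → ℝ)) volume).quasiMeasurePreserving).mono_left
    (hμ.prod Measure.AbsolutelyContinuous.rfl)

theorem integrable_mul_mul_comp_sub_prod {μ : Measure (Fin N → ℝ)} [IsFiniteMeasure μ]
    (hμ : μ ≪ volume) (hK : Integrable K volume) (hf : Measurable f) (hg : Measurable g)
    {Cf Cg : ℝ} (hfb : ∀ᵐ x ∂volume, |f x| ≤ Cf) (hgb : ∀ᵐ x ∂volume, |g x| ≤ Cg) :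
    Integrable (fun p : (Fin N → ℝ) × (Fin N → ℝ) => f p.1 * (K p.2 * g (p.1 - p.2)))
      (μ.prod volume) := by
  have hKsnd : AEStronglyMeasurable (fun p : (Fin N → ℝ) × (Fin N → ℝ) => K p.2)
      (μ.prod volume) :=
    hK.aestronglyMeasurable.comp_quasiMeasurePreserving Measure.quasiMeasurePreserving_snd
  refine Integrable.mono' (g := fun p => |K p.2| * (Cf * Cg))
    (by simpa using (integrable_const (1 : ℝ) (μ := μ)).mul_prod (hK.abs.mul_const (Cf * Cg)))
    ((hf.comp measurable_fst).aestronglyMeasurable.mul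
      (hKsnd.mul (hg.comp (measurable_fst.sub measurable_snd)).aestronglyMeasurable)) ?_
  have hfst : Measure.QuasiMeasurePreserving (Prod.fst : (Fin N → ℝ) × (Fin N → ℝ) → _)
      (μ.prod volume) volume :=
    Measure.quasiMeasurePreserving_fst.mono_right hμ
  filter_upwards [hfst.ae hfb, (quasiMeasurePreserving_sub_prod hμ).ae hgb] with p hfp hgp
  rw [norm_mul, norm_mul, Real.norm_eq_abs, Real.norm_eq_abs, Real.norm_eq_abs]
  calc |f p.1| * (|K p.2| * |g (p.1 - p.2)|) ≤ Cf * (|K p.2| * Cg) :=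
        mul_le_mul hfp (mul_le_mul_of_nonneg_left hgp (abs_nonneg _)) (by positivity)
          ((abs_nonneg _).trans hfp)
    _ = |K p.2| * (Cf * Cg) := by ring

theorem setIntegral_mul_conv (hK : Integrable K volume) (hf : Measurable f) (hg : Measurable g)
    {Cf Cg : ℝ} (hfb : ∀ᵐ x ∂volume, |f x| ≤ Cf) (hgb : ∀ᵐ x ∂volume, |g x| ≤ Cg) :
    ∫ x in unitBox N, f x * conv K g x = ∫ z, K z * ∫ x in unitBox N, f x * g (x - z) := by
  simp_rw [conv_eq_integral_mul_comp_sub, ← integral_const_mul]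
  rw [integral_integral_swap (integrable_mul_mul_comp_sub_prod
    Measure.restrict_le_self.absolutelyContinuous hK hf hg hfb hgb)]
  simp_rw [mul_left_comm (f _)]

end Convolution

def convCommutator {N : ℕ} (K f g : (Fin N → ℝ) → ℝ) (x : Fin N → ℝ) : ℝ :=
  f x * conv K g x - g x * conv K f x

section ConvCommutator

variable {N : ℕ} {K f g : (Fin N → ℝ) → ℝ} {Cf Cg : ℝ}

theorem integrableOn_mul_conv (hK : Integrable K volume) (hf : Measurable f)
    (hg : Measurable g) (hfb : ∀ᵐ x ∂volume, |f x| ≤ Cf) (hgb : ∀ᵐ x ∂volume, |g x| ≤ Cg) :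
    IntegrableOn (fun x => f x * conv K g x) (unitBox N) := by
  refine Integrable.of_bound
    (hf.aestronglyMeasurable.mul (aestronglyMeasurable_conv hK hg)).restrict
    (Cf * ((∫ z, |K z|) * Cg)) (ae_restrict_of_ae ?_)
  filter_upwards [hfb] with x hx
  rw [norm_mul, Real.norm_eq_abs, Real.norm_eq_abs]
  exact mul_le_mul hx (abs_conv_le hK hgb x) (abs_nonneg _) ((abs_nonneg _).trans hx)

theorem aestronglyMeasurable_convCommutator (hK : Integrable K volume) (hf : Measurable f)
    (hg : Measurable g) : AEStronglyMeasurable (convCommutator K f g) volume :=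
  (hf.aestronglyMeasurable.mul (aestronglyMeasurable_conv hK hg)).sub
    (hg.aestronglyMeasurable.mul (aestronglyMeasurable_conv hK hf))

theorem abs_convCommutator_le (hK : Integrable K volume) {x : Fin N → ℝ}
    (hfx : |f x| ≤ Cf) (hgx : |g x| ≤ Cg)
    (hfb : ∀ᵐ y ∂volume, |f y| ≤ Cf) (hgb : ∀ᵐ y ∂volume, |g y| ≤ Cg) :
    |convCommutator K f g x| ≤ 2 * ((∫ z, |K z|) * Cf * Cg) := by
  have hCf : 0 ≤ Cf := (abs_nonneg _).trans hfx
  have hCg : 0 ≤ Cg := (abs_nonneg _).trans hgx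
  have h₁ : |f x * conv K g x| ≤ Cf * ((∫ z, |K z|) * Cg) := by
    rw [abs_mul]; exact mul_le_mul hfx (abs_conv_le hK hgb x) (abs_nonneg _) hCf
  have h₂ : |g x * conv K f x| ≤ Cg * ((∫ z, |K z|) * Cf) := by
    rw [abs_mul]; exact mul_le_mul hgx (abs_conv_le hK hfb x) (abs_nonneg _) hCg
  calc |convCommutator K f g x| ≤ |f x * conv K g x| + |g x * conv K f x| := abs_sub _ _
    _ ≤ 2 * ((∫ z, |K z|) * Cf * Cg) := by linarith

theorem setIntegral_convCommutator_eq_zero (hK : Integrable K volume)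
    (hKeven : ∀ x, K (-x) = K x) (hf : Measurable f) (hg : Measurable g)
    (hfp : IsPeriodic f) (hgp : IsPeriodic g)
    (hfb : ∀ᵐ x ∂volume, |f x| ≤ Cf) (hgb : ∀ᵐ x ∂volume, |g x| ≤ Cg) :
    ∫ x in unitBox N, convCommutator K f g x = 0 := by
  unfold convCommutator
  rw [integral_sub (integrableOn_mul_conv hK hf hg hfb hgb)
    (integrableOn_mul_conv hK hg hf hgb hfb), setIntegral_mul_conv hK hf hg hfb hgb,
    setIntegral_mul_conv hK hg hf hgb hfb, sub_eq_zero,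
    ← integral_neg_eq_self (fun z => K z * ∫ x in unitBox N, g x * f (x - z))]
  simp_rw [hKeven, sub_neg_eq_add, hgp.setIntegral_mul_comp_sub hfp]

end ConvCommutator

def densitySimplex : Set (ℝ × ℝ) := {p | 0 ≤ p.1 ∧ 0 ≤ p.2 ∧ p.1 + p.2 ≤ 1}

theorem isClosed_densitySimplex : IsClosed densitySimplex :=
  (isClosed_le continuous_const continuous_fst).inter
    ((isClosed_le continuous_const continuous_snd).inter
      (isClosed_le (continuous_fst.add continuous_snd) continuous_const))

theorem isCompact_densitySimplex : IsCompact densitySimplex := by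
  refine IsCompact.of_isClosed_subset (s := Icc (0 : ℝ) 1 ×ˢ Icc (0 : ℝ) 1)
    (isCompact_Icc.prod isCompact_Icc) isClosed_densitySimplex ?_
  rintro p ⟨h₁, h₂, h₁₂⟩
  exact ⟨⟨h₁, by linarith⟩, ⟨h₂, by linarith⟩⟩

theorem exists_abs_le_on_densitySimplex {φ : ℝ × ℝ → ℝ} (hφ : Continuous φ) :
    ∃ C, ∀ p ∈ densitySimplex, |φ p| ≤ C :=
  isCompact_densitySimplex.exists_bound_of_continuousOn hφ.continuousOn

namespace MBar

variable {N : ℕ} {r b : (Fin N → ℝ) → ℝ} {φ : ℝ × ℝ → ℝ}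

theorem ae_mem_densitySimplex (h : (r, b) ∈ MBar N) :
    ∀ᵐ x ∂volume, (r x, b x) ∈ densitySimplex := by
  obtain ⟨-, -, -, -, hr, hb, hrb⟩ := h
  filter_upwards [hr, hb, hrb] with _ h₁ h₂ h₁₂ using ⟨h₁, h₂, h₁₂⟩

theorem measurable_comp (h : (r, b) ∈ MBar N) (hφ : Continuous φ) :
    Measurable fun x => φ (r x, b x) :=
  hφ.measurable.comp (h.1.prodMk h.2.1)

theorem isPeriodic_comp (h : (r, b) ∈ MBar N) (φ : ℝ × ℝ → ℝ) :
    IsPeriodic fun x => φ (r x, b x) :=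
  h.2.2.1.comp₂ (fun p q => φ (p, q)) h.2.2.2.1

theorem ae_abs_comp_le (h : (r, b) ∈ MBar N) {C : ℝ}
    (hC : ∀ p ∈ densitySimplex, |φ p| ≤ C) : ∀ᵐ x ∂volume, |φ (r x, b x)| ≤ C :=
  (MBar.ae_mem_densitySimplex h).mono fun _ hx => hC _ hx

theorem setIntegral_convCommutator_eq_zero (h : (r, b) ∈ MBar N) {K : (Fin N → ℝ) → ℝ}
    (hK : Integrable K volume) (hKeven : ∀ x, K (-x) = K x) {ψ : ℝ × ℝ → ℝ}
    (hφ : Continuous φ) (hψ : Continuous ψ) :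
    ∫ x in unitBox N,
      convCommutator K (fun y => φ (r y, b y)) (fun y => ψ (r y, b y)) x = 0 := by
  obtain ⟨Cφ, hCφ⟩ := exists_abs_le_on_densitySimplex hφ
  obtain ⟨Cψ, hCψ⟩ := exists_abs_le_on_densitySimplex hψ
  exact _root_.setIntegral_convCommutator_eq_zero hK hKeven (MBar.measurable_comp h hφ)
    (MBar.measurable_comp h hψ) (MBar.isPeriodic_comp h φ) (MBar.isPeriodic_comp h ψ)
    (MBar.ae_abs_comp_le h hCφ) (MBar.ae_abs_comp_le h hCψ)

end MBar

section MassConservation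

theorem ae_forall_mem_of_continuous {T α E : Type*} [TopologicalSpace T]
    [TopologicalSpace.SeparableSpace T] [TopologicalSpace E] [MeasurableSpace α]
    {μ : Measure α} {f : T → α → E} {S : Set E} (hS : IsClosed S)
    (hf : ∀ x, Continuous fun t => f t x) (h : ∀ t, ∀ᵐ x ∂μ, f t x ∈ S) :
    ∀ᵐ x ∂μ, ∀ t, f t x ∈ S := by
  obtain ⟨D, hDc, hDd⟩ := TopologicalSpace.exists_countable_dense T
  filter_upwards [(ae_ball_iff hDc).2 fun t _ => h t] with x hx t
  exact closure_minimal (fun t ht => hx t ht) (hS.preimage (hf x)) (hDd t)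

theorem integral_eq_of_hasDerivAt_of_integral_eq_zero {α : Type*} [MeasurableSpace α]
    {μ : Measure α} [IsFiniteMeasure μ] {u v : ℝ → α → ℝ} (hu : ∀ t, Integrable (u t) μ)
    (hv : ∀ t, AEStronglyMeasurable (v t) μ) {C : ℝ} (hvC : ∀ᵐ x ∂μ, ∀ t, |v t x| ≤ C)
    (hderiv : ∀ t x, HasDerivAt (fun s => u s x) (v t x) t)
    (hzero : ∀ t, ∫ x, v t x ∂μ = 0) (t s : ℝ) :
    ∫ x, u t x ∂μ = ∫ x, u s x ∂μ := by
  have hasDerivAt_integral (t₀ : ℝ) : HasDerivAt (fun t => ∫ x, u t x ∂μ) 0 t₀ := by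
    have := (hasDerivAt_integral_of_dominated_loc_of_deriv_le (bound := fun _ => C)
      (Metric.ball_mem_nhds t₀ one_pos) (.of_forall fun t => (hu t).1) (hu t₀) (hv t₀)
      (hvC.mono fun x hx t _ => hx t) (integrable_const C)
      (.of_forall fun x t _ => hderiv t x)).2
    rwa [hzero] at this
  exact is_const_of_deriv_eq_zero (fun t => (hasDerivAt_integral t).differentiableAt)
    (fun t => (hasDerivAt_integral t).deriv) t s

variable {N : ℕ} {K : (Fin N → ℝ) → ℝ} {φ ψ χ : ℝ × ℝ → ℝ}

theorem setIntegral_eq_of_hasDerivAt_convCommutator (hK : Integrable K volume)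
    (hKeven : ∀ x, K (-x) = K x) (hφ : Continuous φ) (hψ : Continuous ψ) (hχ : Continuous χ)
    {r b : ℝ → (Fin N → ℝ) → ℝ} (hmem : ∀ t, (r t, b t) ∈ MBar N)
    (hr : ∀ x, Continuous fun t => r t x) (hb : ∀ x, Continuous fun t => b t x)
    (hderiv : ∀ t x, HasDerivAt (fun s => χ (r s x, b s x))
      (convCommutator K (fun y => φ (r t y, b t y)) (fun y => ψ (r t y, b t y)) x) t)
    (t s : ℝ) :
    ∫ x in unitBox N, χ (r t x, b t x) = ∫ x in unitBox N, χ (r s x, b s x) := by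
  obtain ⟨Cφ, hCφ⟩ := exists_abs_le_on_densitySimplex hφ
  obtain ⟨Cψ, hCψ⟩ := exists_abs_le_on_densitySimplex hψ
  obtain ⟨Cχ, hCχ⟩ := exists_abs_le_on_densitySimplex hχ
  have hsimplex : ∀ᵐ x ∂volume, ∀ t, (r t x, b t x) ∈ densitySimplex :=
    ae_forall_mem_of_continuous isClosed_densitySimplex (fun x => (hr x).prodMk (hb x))
      fun t => MBar.ae_mem_densitySimplex (hmem t)
  refine integral_eq_of_hasDerivAt_of_integral_eq_zero (u := fun t x => χ (r t x, b t x))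
    (C := 2 * ((∫ z, |K z|) * Cφ * Cψ))
    (fun t => Integrable.of_bound (MBar.measurable_comp (hmem t) hχ).aestronglyMeasurable.restrict
      Cχ (ae_restrict_of_ae (MBar.ae_abs_comp_le (hmem t) hCχ)))
    (fun t => (aestronglyMeasurable_convCommutator hK (MBar.measurable_comp (hmem t) hφ)
      (MBar.measurable_comp (hmem t) hψ)).restrict)
    (ae_restrict_of_ae ?_) hderiv
    (fun t => MBar.setIntegral_convCommutator_eq_zero (hmem t) hK hKeven hφ hψ) t s
  filter_upwards [hsimplex] with x hx t
  exact abs_convCommutator_le hK (hCφ _ (hx t)) (hCψ _ (hx t)) (MBar.ae_abs_comp_le (hmem t) hCφ)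
    (MBar.ae_abs_comp_le (hmem t) hCψ)

end MassConservation

theorem F_zero_mean_and_mass_conservation_general (N : ℕ) (K₁ : (Fin N → ℝ) → ℝ)
    (hK : Integrable K₁ volume) (hKeven : ∀ x, K₁ (-x) = K₁ x)
    (C_r C_rr C_rb C_b C_br C_bb : ℝ) :
    (∀ r b : (Fin N → ℝ) → ℝ, (r, b) ∈ MBar N →
      (∫ x in unitBox N, Fr K₁ C_r C_rr C_rb r b x) = 0 ∧
      (∫ x in unitBox N, Fb K₁ C_b C_br C_bb r b x) = 0) ∧
    ∀ r b : ℝ → (Fin N → ℝ) → ℝ,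
      (∀ t, (r t, b t) ∈ MBar N) →
      (∀ t x, HasDerivAt (fun s => r s x) (Fr K₁ C_r C_rr C_rb (r t) (b t) x) t) →
      (∀ t x, HasDerivAt (fun s => b s x) (Fb K₁ C_b C_br C_bb (r t) (b t) x) t) →
      ∀ t s : ℝ,
        (∫ x in unitBox N, r t x) = (∫ x in unitBox N, r s x) ∧
        (∫ x in unitBox N, b t x) = (∫ x in unitBox N, b s x) := by
  have hvacancy : Continuous fun p : ℝ × ℝ => 1 - (p.1 + p.2) := by fun_prop
  have hfluxR : Continuous fun p : ℝ × ℝ => Dr C_r C_rr C_rb p.1 p.2 * p.1 := by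
    unfold Dr; fun_prop
  have hfluxB : Continuous fun p : ℝ × ℝ => Db C_b C_br C_bb p.1 p.2 * p.2 := by
    unfold Db; fun_prop
  refine ⟨fun r b hmem => ⟨MBar.setIntegral_convCommutator_eq_zero hmem hK hKeven hvacancy hfluxR,
    MBar.setIntegral_convCommutator_eq_zero hmem hK hKeven hvacancy hfluxB⟩,
    fun r b hmem hdr hdb t s => ?_⟩
  have hr (x) : Continuous fun t => r t x :=
    continuous_iff_continuousAt.2 fun t => (hdr t x).continuousAt
  have hb (x) : Continuous fun t => b t x :=
    continuous_iff_continuousAt.2 fun t => (hdb t x).continuousAt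
  exact ⟨setIntegral_eq_of_hasDerivAt_convCommutator hK hKeven hvacancy hfluxR continuous_fst
      hmem hr hb hdr t s,
    setIntegral_eq_of_hasDerivAt_convCommutator hK hKeven hvacancy hfluxB continuous_snd
      hmem hr hb hdb t s⟩

/-- **Conservation of mass.** For every `(r, b) ∈ M̄` and every even kernel `K₁ ∈ L¹`, both
components of `F(r,b)` have zero mean over the torus; consequently, along any solution of
the integro-differential system `d/dt (r,b) = F(r,b)` with values in `M̄`, the total masses
`∫ r dx` and `∫ b dx` are conserved. -/
theorem F_zero_mean_and_mass_conservation (N : ℕ) (K₁ : (Fin N → ℝ) → ℝ)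
    (hK : Integrable K₁ volume) (hKeven : ∀ x, K₁ (-x) = K₁ x)
    (C_r C_rr C_rb C_b C_br C_bb : ℝ)
    (hCr : 0 < C_r) (hCrr : 0 < C_rr) (hCrb : 0 < C_rb)
    (hCb : 0 < C_b) (hCbr : 0 < C_br) (hCbb : 0 < C_bb) :
    (∀ r b : (Fin N → ℝ) → ℝ, (r, b) ∈ MBar N →
      (∫ x in unitBox N, Fr K₁ C_r C_rr C_rb r b x) = 0 ∧
      (∫ x in unitBox N, Fb K₁ C_b C_br C_bb r b x) = 0) ∧
    ∀ r b : ℝ → (Fin N → ℝ) → ℝ,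
      (∀ t, (r t, b t) ∈ MBar N) →
      (∀ t x, HasDerivAt (fun s => r s x) (Fr K₁ C_r C_rr C_rb (r t) (b t) x) t) →
      (∀ t x, HasDerivAt (fun s => b s x) (Fb K₁ C_b C_br C_bb (r t) (b t) x) t) →
      ∀ t s : ℝ,
        (∫ x in unitBox N, r t x) = (∫ x in unitBox N, r s x) ∧
        (∫ x in unitBox N, b t x) = (∫ x in unitBox N, b s x) :=
  F_zero_mean_and_mass_conservation_general N K₁ hK hKeven C_r C_rr C_rb C_b C_br C_bb
end
end

section
/- Let d_r, d_b > 0, 0 < r_0, 0 < b_0, ρ_0 = r_0 + b_0 < 1, and ξ ≠ 0. Then the 2×2 matrix A = −|ξ|^2 [[d_r(1−b_0), d_r r_0],[d_b b_0, d_b(1−r_0)]] has two real eigenvalues, given by λ_{1,2} = −(|ξ|^2/2)( d_r(1−b_0) + d_b(1−r_0) ± √( (d_r(1−b_0) + d_b(1−r_0))^2 − 4 d_r d_b (1 − r_0 − b_0) ) ), and both eigenvalues are strictly negative; hence the constant steady state of the two-species PDE model is linearly stable when all preference constants C_ij vanish. -/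
open Polynomial

/-- **Linear stability for vanishing preferences.** For diffusivities `d_r, d_b > 0`,
densities `0 < r₀`, `0 < b₀` with `r₀ + b₀ < 1`, and a wavenumber `ξ ≠ 0`, the matrix
`A = -|ξ|² [[d_r(1-b₀), d_r r₀], [d_b b₀, d_b(1-r₀)]]` has two real eigenvalues
`λ₁,₂ = -(|ξ|²/2)(d_r(1-b₀)+d_b(1-r₀) ± √((d_r(1-b₀)+d_b(1-r₀))² - 4 d_r d_b (1-r₀-b₀)))`,
both strictly negative: the constant steady state is linearly stable when all
preference constants vanish. -/
theorem constant_state_stable_zero_preference (N : ℕ) (d_r d_b r₀ b₀ : ℝ)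
    (hdr : 0 < d_r) (hdb : 0 < d_b) (hr : 0 < r₀) (hb : 0 < b₀) (hρ : r₀ + b₀ < 1)
    (ξ : EuclideanSpace ℝ (Fin N)) (hξ : ξ ≠ 0) :
    let A : Matrix (Fin 2) (Fin 2) ℝ :=
      !![-‖ξ‖ ^ 2 * (d_r * (1 - b₀)), -‖ξ‖ ^ 2 * (d_r * r₀);
         -‖ξ‖ ^ 2 * (d_b * b₀), -‖ξ‖ ^ 2 * (d_b * (1 - r₀))]
    let s : ℝ := d_r * (1 - b₀) + d_b * (1 - r₀)
    let disc : ℝ := s ^ 2 - 4 * (d_r * d_b * (1 - r₀ - b₀))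
    let lam₁ : ℝ := -(‖ξ‖ ^ 2 / 2) * (s + Real.sqrt disc)
    let lam₂ : ℝ := -(‖ξ‖ ^ 2 / 2) * (s - Real.sqrt disc)
    0 ≤ disc ∧ A.charpoly = (X - C lam₁) * (X - C lam₂) ∧ lam₁ < 0 ∧ lam₂ < 0 := by
  intro A s disc lam₁ lam₂
  have hk : (0:ℝ) < ‖ξ‖ ^ 2 := by
    have : ‖ξ‖ ≠ 0 := norm_ne_zero_iff.mpr hξ
    positivity
  have hs : 0 < s := by
    simp only [s]; nlinarith
  have hdisc : 0 ≤ disc := by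
    simp only [disc, s]
    nlinarith [sq_nonneg (d_r * (1 - b₀) - d_b * (1 - r₀)),
      mul_pos (mul_pos hdr hdb) (mul_pos hr hb)]
  have hsq : Real.sqrt disc ^ 2 = disc := Real.sq_sqrt hdisc
  have hsqnn : 0 ≤ Real.sqrt disc := Real.sqrt_nonneg _
  have hlt : Real.sqrt disc < s := by
    have h1 : disc < s ^ 2 := by
      simp only [disc, s]
      nlinarith [mul_pos (mul_pos hdr hdb) (show (0:ℝ) < 1 - r₀ - b₀ by linarith)]
    calc Real.sqrt disc < Real.sqrt (s ^ 2) := Real.sqrt_lt_sqrt hdisc h1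
      _ = s := by rw [Real.sqrt_sq hs.le]
  refine ⟨hdisc, ?_, ?_, ?_⟩
  · have h2 : lam₁ + lam₂ = -‖ξ‖ ^ 2 * s := by simp only [lam₁, lam₂]; ring
    have h3 : lam₁ * lam₂ = (‖ξ‖ ^ 2) ^ 2 * (d_r * d_b * (1 - r₀ - b₀)) := by
      have : lam₁ * lam₂ = (‖ξ‖ ^ 2 / 2) ^ 2 * (s ^ 2 - Real.sqrt disc ^ 2) := by
        simp only [lam₁, lam₂]; ring
      rw [this, hsq]; simp only [disc]; ring
    rw [Matrix.charpoly, Matrix.det_fin_two]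
    simp only [Matrix.charmatrix_apply_eq, Matrix.charmatrix_apply_ne _ _ _
      (by decide : (0 : Fin 2) ≠ 1), Matrix.charmatrix_apply_ne _ _ _
      (by decide : (1 : Fin 2) ≠ 0)]
    have hA00 : A 0 0 = -‖ξ‖ ^ 2 * (d_r * (1 - b₀)) := rfl
    have hA01 : A 0 1 = -‖ξ‖ ^ 2 * (d_r * r₀) := rfl
    have hA10 : A 1 0 = -‖ξ‖ ^ 2 * (d_b * b₀) := rfl
    have hA11 : A 1 1 = -‖ξ‖ ^ 2 * (d_b * (1 - r₀)) := rfl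
    rw [hA00, hA01, hA10, hA11]
    have e2 : (-‖ξ‖ ^ 2 * (d_r * (1 - b₀))) + (-‖ξ‖ ^ 2 * (d_b * (1 - r₀))) = lam₁ + lam₂ := by
      rw [h2]; simp only [s]; ring
    have e3 : (-‖ξ‖ ^ 2 * (d_r * (1 - b₀))) * (-‖ξ‖ ^ 2 * (d_b * (1 - r₀)))
        - (-‖ξ‖ ^ 2 * (d_r * r₀)) * (-‖ξ‖ ^ 2 * (d_b * b₀)) = lam₁ * lam₂ := by
      rw [h3]; ring
    have expand : ∀ a b c d : ℝ, (X - C a) * (X - C d) - (-C b) * (-C c)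
        = (X : ℝ[X]) ^ 2 - C (a + d) * X + C (a * d - b * c) := by
      intro a b c d
      simp only [C_add, C_sub, C_mul]
      ring
    rw [expand, e2, e3]
    simp only [C_add, C_mul]
    ring
  · have h4 : 0 < s + Real.sqrt disc := by linarith
    show -(‖ξ‖ ^ 2 / 2) * (s + Real.sqrt disc) < 0
    rw [neg_mul, neg_lt_zero]
    exact mul_pos (half_pos hk) h4
  · have h4 : 0 < s - Real.sqrt disc := by linarith
    show -(‖ξ‖ ^ 2 / 2) * (s - Real.sqrt disc) < 0
    rw [neg_mul, neg_lt_zero]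
    exact mul_pos (half_pos hk) h4
end

section
/- Let 0 < r_0, 0 < b_0, ρ_0 = r_0 + b_0 < 1, ξ ≠ 0 and κ > 0. Then there exists C* > 0 such that for all C > C* and all positive reals d_r, d_b, the 2×2 matrix A(C) with entries L_{11} = −|ξ|^2 d_r[(1−b_0) − C(1−ρ_0) r_0 κ], L_{12} = −|ξ|^2 d_r[r_0 + C(1−ρ_0) r_0 κ], L_{21} = −|ξ|^2 d_b[b_0 + C(1−ρ_0) b_0 κ], L_{22} = −|ξ|^2 d_b[(1−r_0) − C(1−ρ_0) b_0 κ] has strictly negative determinant, and therefore possesses a real strictly positive eigenvalue; hence for sufficiently large common preference constant C the constant steady state is linearly unstable. -/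
open Polynomial

lemma charpoly_eval_fin_two (M : Matrix (Fin 2) (Fin 2) ℝ) (lam : ℝ) :
    M.charpoly.eval lam = lam ^ 2 - M.trace * lam + M.det := by
  rw [Matrix.charpoly, Matrix.det_fin_two, Matrix.trace_fin_two, Matrix.det_fin_two]
  rw [Matrix.charmatrix_apply_eq, Matrix.charmatrix_apply_eq,
    Matrix.charmatrix_apply_ne _ _ _ (by decide : (0 : Fin 2) ≠ 1),
    Matrix.charmatrix_apply_ne _ _ _ (by decide : (1 : Fin 2) ≠ 0)]
  simp
  ring

/-- **Instability for large preferences.** Let `0 < r₀`, `0 < b₀`, `ρ₀ = r₀ + b₀ < 1`,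
`ξ ≠ 0` and `κ = K̂₂(ξ) > 0`. Then there is `C* > 0` such that for every common preference
constant `C > C*` and all diffusivities `d_r, d_b > 0`, the Fourier-symbol matrix `A(C)` of
the linearization has strictly negative determinant, hence a real strictly positive
eigenvalue: the constant steady state is linearly unstable for large preferences. -/
theorem constant_state_unstable_large_preference (N : ℕ) (r₀ b₀ κ : ℝ)
    (hr : 0 < r₀) (hb : 0 < b₀) (hρ : r₀ + b₀ < 1) (hκ : 0 < κ)
    (ξ : EuclideanSpace ℝ (Fin N)) (hξ : ξ ≠ 0) :
    ∃ Cstar > (0 : ℝ), ∀ C > Cstar, ∀ d_r d_b : ℝ, 0 < d_r → 0 < d_b →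
      let A : Matrix (Fin 2) (Fin 2) ℝ :=
        !![-‖ξ‖ ^ 2 * (d_r * ((1 - b₀) - C * (1 - (r₀ + b₀)) * r₀ * κ)),
           -‖ξ‖ ^ 2 * (d_r * (r₀ + C * (1 - (r₀ + b₀)) * r₀ * κ));
           -‖ξ‖ ^ 2 * (d_b * (b₀ + C * (1 - (r₀ + b₀)) * b₀ * κ)),
           -‖ξ‖ ^ 2 * (d_b * ((1 - r₀) - C * (1 - (r₀ + b₀)) * b₀ * κ))]
      A.det < 0 ∧ ∃ lam : ℝ, 0 < lam ∧ A.charpoly.IsRoot lam := by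
  have hPpos : 0 < (r₀ + b₀) - (r₀ - b₀) ^ 2 := by nlinarith [sq_nonneg (r₀ - b₀)]
  set P : ℝ := (r₀ + b₀) - (r₀ - b₀) ^ 2 with hP
  refine ⟨1 / (κ * P), by positivity, ?_⟩
  intro C hC d_r d_b hdr hdb
  intro A
  have hnorm : 0 < ‖ξ‖ := norm_pos_iff.mpr hξ
  have hCκP : 1 < C * κ * P := by
    have h1 : 1 / (κ * P) < C := hC
    calc (1 : ℝ) = (1 / (κ * P)) * (κ * P) := by field_simp
    _ < C * (κ * P) := by
        apply mul_lt_mul_of_pos_right h1 (by positivity)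
    _ = C * κ * P := by ring
  have hdet : A.det = ‖ξ‖ ^ 4 * (d_r * d_b) * ((1 - (r₀ + b₀)) * (1 - C * κ * P)) := by
    show (Matrix.det !![_, _; _, _]) = _
    rw [Matrix.det_fin_two_of, hP]
    ring
  have hdetneg : A.det < 0 := by
    rw [hdet]
    have : (1 - C * κ * P) < 0 := by linarith
    have h1ρ : 0 < 1 - (r₀ + b₀) := by linarith
    have : (1 - (r₀ + b₀)) * (1 - C * κ * P) < 0 := mul_neg_of_pos_of_neg h1ρ this
    have hξ4 : 0 < ‖ξ‖ ^ 4 * (d_r * d_b) := by positivity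
    exact mul_neg_of_pos_of_neg hξ4 this
  refine ⟨hdetneg, ?_⟩
  set t := A.trace with ht
  have hdisc : 0 ≤ t ^ 2 - 4 * A.det := by nlinarith [sq_nonneg t]
  set s := Real.sqrt (t ^ 2 - 4 * A.det) with hs
  have hs0 : 0 ≤ s := Real.sqrt_nonneg _
  have hs2 : s ^ 2 = t ^ 2 - 4 * A.det := Real.sq_sqrt hdisc
  have hlampos : 0 < (t + s) / 2 := by nlinarith
  refine ⟨(t + s) / 2, hlampos, ?_⟩
  show A.charpoly.eval ((t + s) / 2) = 0
  rw [charpoly_eval_fin_two]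
  nlinarith [hs2]
end

section
/- Let C_rr > 4, r_± = 1/2 ± √(1/4 − 1/C_rr), and let M satisfy r_− < M < r_+. Define g : (0,1) → ℝ by g(r) = r − M + (1/C_rr) log( M(1−r) / (r(1−M)) ). Then g(M) = 0 and g'(M) > 0, and g has exactly two further zeros r̲ and r̄ in (0,1), which satisfy 0 < r̲ < r_− and r_+ < r̄ < 1; that is, the zero set of g in (0,1) is exactly {r̲, M, r̄}. -/
/-!
On `(0, 1)`, `g = F - F M` for `F = nonlinearity C_rr`, i.e. `F r = r + log ((1 - r) / r) / C_rr`.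
Its derivative `1 - 1 / (C_rr r (1 - r))` factors as `(r - r₋)(r₊ - r) / (r (1 - r))`, so `F`
decreases on `(0, r₋]`, increases on `[r₋, r₊]` and decreases on `[r₊, 1)`, running from `+∞` at
`0` to `-∞` at `1`. Since `F r₋ < F M < F r₊`, the level `F M` is attained once on each piece.
-/

open Real Set Filter Topology

noncomputable section

def rMinus (C : ℝ) : ℝ := 1 / 2 - √(1 / 4 - 1 / C)

def rPlus (C : ℝ) : ℝ := 1 / 2 + √(1 / 4 - 1 / C)

def nonlinearity (C r : ℝ) : ℝ := r + (log (1 - r) - log r) / C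

end

section IntermediateValue

variable {f : ℝ → ℝ} {a b z : ℝ}

lemma exists_mem_Ioo_eq_of_tendsto_nhdsGT_atTop (hab : a < b) (hf : ContinuousOn f (Ioc a b))
    (hfa : Tendsto f (𝓝[>] a) atTop) (hfb : f b < z) : ∃ x ∈ Ioo a b, f x = z := by
  obtain ⟨c, hzc, hc⟩ := ((hfa.eventually_gt_atTop z).and (Ioo_mem_nhdsGT hab)).exists
  obtain ⟨x, hx, hfx⟩ :=
    intermediate_value_Ioo' hc.2.le (hf.mono (Icc_subset_Ioc hc.1 le_rfl)) ⟨hfb, hzc⟩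
  exact ⟨x, ⟨hc.1.trans hx.1, hx.2⟩, hfx⟩

lemma exists_mem_Ioo_eq_of_tendsto_nhdsLT_atBot (hab : a < b) (hf : ContinuousOn f (Ico a b))
    (hfb : Tendsto f (𝓝[<] b) atBot) (hfa : z < f a) : ∃ x ∈ Ioo a b, f x = z := by
  obtain ⟨c, hcz, hc⟩ := ((hfb.eventually_lt_atBot z).and (Ioo_mem_nhdsLT hab)).exists
  obtain ⟨x, hx, hfx⟩ :=
    intermediate_value_Ioo' hc.1.le (hf.mono (Icc_subset_Ico_right hc.2)) ⟨hcz, hfa⟩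
  exact ⟨x, ⟨hx.1, hx.2.trans hc.2⟩, hfx⟩

end IntermediateValue

lemma sep_Ioo_eq_of_strictAntiOn_strictMonoOn_strictAntiOn {f : ℝ → ℝ} {a p q b z x₁ x₂ x₃ : ℝ}
    (h₁ : StrictAntiOn f (Ioc a p)) (h₂ : StrictMonoOn f (Icc p q)) (h₃ : StrictAntiOn f (Ico q b))
    (hx₁ : x₁ ∈ Ioc a p) (hx₂ : x₂ ∈ Icc p q) (hx₃ : x₃ ∈ Ico q b)
    (hfx₁ : f x₁ = z) (hfx₂ : f x₂ = z) (hfx₃ : f x₃ = z) :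
    {r ∈ Ioo a b | f r = z} = {x₁, x₂, x₃} := by
  ext r
  simp only [mem_ofPred_eq, mem_insert_iff, mem_singleton_iff]
  constructor
  · rintro ⟨hr, hfr⟩
    rcases le_or_gt r p with hrp | hpr
    · exact Or.inl (h₁.injOn ⟨hr.1, hrp⟩ hx₁ (hfr.trans hfx₁.symm))
    rcases le_or_gt r q with hrq | hqr
    · exact Or.inr (Or.inl (h₂.injOn ⟨hpr.le, hrq⟩ hx₂ (hfr.trans hfx₂.symm)))
    · exact Or.inr (Or.inr (h₃.injOn ⟨hqr.le, hr.2⟩ hx₃ (hfr.trans hfx₃.symm)))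
  · rintro (rfl | rfl | rfl)
    · exact ⟨⟨hx₁.1, by linarith [hx₁.2, hx₂.1, hx₂.2, hx₃.1, hx₃.2]⟩, hfx₁⟩
    · exact ⟨⟨by linarith [hx₁.1, hx₁.2, hx₂.1], by linarith [hx₂.2, hx₃.1, hx₃.2]⟩, hfx₂⟩
    · exact ⟨⟨by linarith [hx₁.1, hx₁.2, hx₂.1, hx₂.2, hx₃.1], hx₃.2⟩, hfx₃⟩

section Roots

variable {C : ℝ}

lemma sqrt_quarter_sub_inv_lt_half (hC : 0 < C) : √(1 / 4 - 1 / C) < 1 / 2 := by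
  rw [sqrt_lt' (by norm_num)]
  have := one_div_pos.mpr hC
  linarith

lemma rMinus_pos (hC : 0 < C) : 0 < rMinus C := by
  have := sqrt_quarter_sub_inv_lt_half hC
  unfold rMinus; linarith

lemma rPlus_lt_one (hC : 0 < C) : rPlus C < 1 := by
  have := sqrt_quarter_sub_inv_lt_half hC
  unfold rPlus; linarith

lemma rMinus_le_rPlus : rMinus C ≤ rPlus C := by
  have := sqrt_nonneg (1 / 4 - 1 / C)
  unfold rMinus rPlus; linarith

lemma mul_one_sub_sub_inv_eq (hC : 4 ≤ C) (r : ℝ) :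
    r * (1 - r) - 1 / C = (r - rMinus C) * (rPlus C - r) := by
  have hsq : √(1 / 4 - 1 / C) ^ 2 = 1 / 4 - 1 / C := by
    apply sq_sqrt
    have : 1 / C ≤ 1 / 4 := by gcongr
    linarith
  unfold rMinus rPlus
  linear_combination -hsq

lemma one_sub_inv_mul_mul_one_sub_eq (hC : 4 ≤ C) {r : ℝ} (hr₀ : r ≠ 0) (hr₁ : r ≠ 1) :
    1 - 1 / (C * (r * (1 - r))) = (r - rMinus C) * (rPlus C - r) / (r * (1 - r)) := by
  have hC₀ : C ≠ 0 := by positivity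
  have : 1 - r ≠ 0 := sub_ne_zero.mpr hr₁.symm
  rw [← mul_one_sub_sub_inv_eq hC]
  field_simp

end Roots

section Nonlinearity

variable {C : ℝ}

lemma hasDerivAt_nonlinearity {r : ℝ} (hr₀ : 0 < r) (hr₁ : r < 1) :
    HasDerivAt (nonlinearity C) (1 - 1 / (C * (r * (1 - r)))) r := by
  have h₁ := ((hasDerivAt_id' r).const_sub 1).log (sub_ne_zero.mpr hr₁.ne')
  refine ((hasDerivAt_id' r).add ((h₁.sub (hasDerivAt_log hr₀.ne')).div_const C)).congr_deriv ?_
  rcases eq_or_ne C 0 with rfl | hC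
  · simp
  · have : 1 - r ≠ 0 := by linarith
    field_simp
    ring

lemma continuousOn_nonlinearity : ContinuousOn (nonlinearity C) (Ioo 0 1) :=
  fun _ hr => (hasDerivAt_nonlinearity hr.1 hr.2).continuousAt.continuousWithinAt

lemma hasDerivAt_nonlinearity_eq_factored (hC : 4 ≤ C) {r : ℝ} (hr₀ : 0 < r) (hr₁ : r < 1) :
    HasDerivAt (nonlinearity C) ((r - rMinus C) * (rPlus C - r) / (r * (1 - r))) r := by
  rw [← one_sub_inv_mul_mul_one_sub_eq hC hr₀.ne' hr₁.ne]
  exact hasDerivAt_nonlinearity hr₀ hr₁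

lemma hasDerivWithinAt_nonlinearity_interior (hC : 4 ≤ C) {D : Set ℝ} (hD : D ⊆ Ioo 0 1) :
    ∀ r ∈ interior D, HasDerivWithinAt (nonlinearity C)
      ((r - rMinus C) * (rPlus C - r) / (r * (1 - r))) (interior D) r := fun _ hr =>
  (hasDerivAt_nonlinearity_eq_factored hC (hD (interior_subset hr)).1
    (hD (interior_subset hr)).2).hasDerivWithinAt

lemma strictAntiOn_nonlinearity_Ioc (hC : 4 ≤ C) :
    StrictAntiOn (nonlinearity C) (Ioc 0 (rMinus C)) := by
  have hsub : Ioc 0 (rMinus C) ⊆ Ioo 0 1 :=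
    Ioc_subset_Ioo_right (rMinus_le_rPlus.trans_lt (rPlus_lt_one (by positivity)))
  refine strictAntiOn_of_hasDerivWithinAt_neg (convex_Ioc _ _)
    (continuousOn_nonlinearity.mono hsub) (hasDerivWithinAt_nonlinearity_interior hC hsub) ?_
  rw [interior_Ioc]
  intro r hr
  have h₁ : r < 1 := (hsub (Ioo_subset_Ioc_self hr)).2
  have := rMinus_le_rPlus (C := C)
  exact div_neg_of_neg_of_pos (mul_neg_of_neg_of_pos (by linarith [hr.2]) (by linarith [hr.2]))
    (mul_pos hr.1 (by linarith))

lemma strictMonoOn_nonlinearity_Icc (hC : 4 ≤ C) :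
    StrictMonoOn (nonlinearity C) (Icc (rMinus C) (rPlus C)) := by
  have hC₀ : 0 < C := by positivity
  have hsub : Icc (rMinus C) (rPlus C) ⊆ Ioo 0 1 :=
    Icc_subset_Ioo (rMinus_pos hC₀) (rPlus_lt_one hC₀)
  refine strictMonoOn_of_hasDerivWithinAt_pos (convex_Icc _ _)
    (continuousOn_nonlinearity.mono hsub) (hasDerivWithinAt_nonlinearity_interior hC hsub) ?_
  rw [interior_Icc]
  intro r hr
  have h := hsub (Ioo_subset_Icc_self hr)
  exact div_pos (mul_pos (by linarith [hr.1]) (by linarith [hr.2]))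
    (mul_pos h.1 (by linarith [h.2]))

lemma strictAntiOn_nonlinearity_Ico (hC : 4 ≤ C) :
    StrictAntiOn (nonlinearity C) (Ico (rPlus C) 1) := by
  have hsub : Ico (rPlus C) 1 ⊆ Ioo 0 1 :=
    Ico_subset_Ioo_left ((rMinus_pos (by positivity)).trans_le rMinus_le_rPlus)
  refine strictAntiOn_of_hasDerivWithinAt_neg (convex_Ico _ _)
    (continuousOn_nonlinearity.mono hsub) (hasDerivWithinAt_nonlinearity_interior hC hsub) ?_
  rw [interior_Ico]
  intro r hr
  have h₀ : 0 < r := (hsub (Ioo_subset_Ico_self hr)).1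
  have := rMinus_le_rPlus (C := C)
  exact div_neg_of_neg_of_pos (mul_neg_of_pos_of_neg (by linarith [hr.1]) (by linarith [hr.1]))
    (mul_pos h₀ (by linarith [hr.2]))

lemma tendsto_nonlinearity_nhdsGT_zero (hC : 0 < C) :
    Tendsto (nonlinearity C) (𝓝[>] 0) atTop := by
  have hlog : Tendsto (fun r => log (1 - r) - log r) (𝓝[>] 0) atTop := by
    have h₁ : Tendsto (fun r : ℝ => log (1 - r)) (𝓝[>] 0) (𝓝 (log (1 - 0))) :=
      ((continuousAt_const.sub continuousAt_id).log (by norm_num)).tendsto.mono_left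
        nhdsWithin_le_nhds
    simpa only [sub_eq_add_neg, Function.comp_def, sub_zero, log_one] using
      h₁.add_atTop (tendsto_neg_atBot_atTop.comp tendsto_log_nhdsGT_zero)
  exact (tendsto_nhdsWithin_of_tendsto_nhds tendsto_id).add_atTop (hlog.atTop_div_const hC)

lemma tendsto_nonlinearity_nhdsLT_one (hC : 0 < C) :
    Tendsto (nonlinearity C) (𝓝[<] 1) atBot := by
  have h₁ : Tendsto (fun r : ℝ => 1 - r) (𝓝[<] 1) (𝓝[>] 0) := by
    refine tendsto_nhdsWithin_iff.mpr ⟨?_, ?_⟩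
    · simpa using ((continuous_sub_left (1 : ℝ)).tendsto 1).mono_left nhdsWithin_le_nhds
    · filter_upwards [self_mem_nhdsWithin] with r hr
      exact sub_pos.mpr (mem_Iio.mp hr)
  have h₂ : Tendsto log (𝓝[<] (1 : ℝ)) (𝓝 (log 1)) :=
    (continuousAt_log one_ne_zero).tendsto.mono_left nhdsWithin_le_nhds
  have hlog : Tendsto (fun r => log (1 - r) - log r) (𝓝[<] 1) atBot := by
    simpa only [sub_eq_add_neg, Function.comp_def, sub_zero, log_one] using
      (tendsto_log_nhdsGT_zero.comp h₁).atBot_add h₂.neg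
  exact (tendsto_nhdsWithin_of_tendsto_nhds tendsto_id).add_atBot (hlog.atBot_div_const hC)

end Nonlinearity

lemma nonlinearity_sub_nonlinearity (C : ℝ) {r M : ℝ} (hr : r ∈ Ioo 0 1) (hM : M ∈ Ioo 0 1) :
    nonlinearity C r - nonlinearity C M = r - M + 1 / C * log (M * (1 - r) / (r * (1 - M))) := by
  have h₁ : 1 - r ≠ 0 := by linarith [hr.2]
  have h₂ : 1 - M ≠ 0 := by linarith [hM.2]
  rw [log_div (mul_ne_zero hM.1.ne' h₁) (mul_ne_zero hr.1.ne' h₂), log_mul hM.1.ne' h₁,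
    log_mul hr.1.ne' h₂]
  unfold nonlinearity
  ring

/-- **Zero set of the steady-state nonlinearity.** For `C_rr > 4`,
`r_± = 1/2 ± √(1/4 - 1/C_rr)` and mass `M` with `r_- < M < r_+`, the nonlinearity
`g(r) = r - M + (1/C_rr) log(M(1-r)/(r(1-M)))` satisfies `g(M) = 0`, `g'(M) > 0`, and
`g` has exactly two further zeros `r̲ < r_-` and `r̄ > r_+` in `(0,1)`: the zero set of
`g` in `(0,1)` is exactly `{r̲, M, r̄}`. -/
theorem g_zero_set (M C_rr : ℝ) (hC : 4 < C_rr)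
    (hMm : 1 / 2 - Real.sqrt (1 / 4 - 1 / C_rr) < M)
    (hMp : M < 1 / 2 + Real.sqrt (1 / 4 - 1 / C_rr)) :
    let g : ℝ → ℝ := fun r => r - M + (1 / C_rr) * Real.log (M * (1 - r) / (r * (1 - M)))
    g M = 0 ∧
      HasDerivAt g (1 - 1 / (C_rr * (M * (1 - M)))) M ∧
      0 < 1 - 1 / (C_rr * (M * (1 - M))) ∧
      ∃ rlow rbar : ℝ,
        0 < rlow ∧ rlow < 1 / 2 - Real.sqrt (1 / 4 - 1 / C_rr) ∧
        1 / 2 + Real.sqrt (1 / 4 - 1 / C_rr) < rbar ∧ rbar < 1 ∧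
        {r ∈ Set.Ioo (0 : ℝ) 1 | g r = 0} = {rlow, M, rbar} := by
  intro g
  change rMinus C_rr < M at hMm
  change M < rPlus C_rr at hMp
  set F := nonlinearity C_rr
  have hC₀ : 0 < C_rr := by linarith
  have hM : M ∈ Ioo 0 1 := ⟨(rMinus_pos hC₀).trans hMm, hMp.trans (rPlus_lt_one hC₀)⟩
  have hMmid : M ∈ Icc (rMinus C_rr) (rPlus C_rr) := ⟨hMm.le, hMp.le⟩
  have hgF : EqOn g (fun r => F r - F M) (Ioo 0 1) := fun r hr =>
    (nonlinearity_sub_nonlinearity C_rr hr hM).symm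
  have hmono := strictMonoOn_nonlinearity_Icc hC.le
  obtain ⟨rlow, hrlow, hFrlow⟩ := exists_mem_Ioo_eq_of_tendsto_nhdsGT_atTop (rMinus_pos hC₀)
    (continuousOn_nonlinearity.mono (Ioc_subset_Ioo_right (hM.2.trans' hMm)))
    (tendsto_nonlinearity_nhdsGT_zero hC₀)
    (hmono ⟨le_rfl, rMinus_le_rPlus⟩ hMmid hMm)
  obtain ⟨rbar, hrbar, hFrbar⟩ := exists_mem_Ioo_eq_of_tendsto_nhdsLT_atBot (rPlus_lt_one hC₀)
    (continuousOn_nonlinearity.mono (Ico_subset_Ioo_left (hM.1.trans hMp)))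
    (tendsto_nonlinearity_nhdsLT_one hC₀)
    (hmono hMmid ⟨rMinus_le_rPlus, le_rfl⟩ hMp)
  refine ⟨by simpa using hgF hM, ?_, ?_, rlow, rbar, hrlow.1, hrlow.2, hrbar.1, hrbar.2, ?_⟩
  · exact ((hasDerivAt_nonlinearity hM.1 hM.2).sub_const (F M)).congr_of_eventuallyEq
      (hgF.eventuallyEq_of_mem (isOpen_Ioo.mem_nhds hM))
  · rw [one_sub_inv_mul_mul_one_sub_eq hC.le hM.1.ne' hM.2.ne]
    exact div_pos (mul_pos (by linarith) (by linarith)) (mul_pos hM.1 (by linarith [hM.2]))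
  · rw [show {r ∈ Ioo 0 1 | g r = 0} = {r ∈ Ioo 0 1 | F r = F M} from
      sep_ext_iff.mpr fun r hr => by rw [hgF hr, sub_eq_zero]]
    exact sep_Ioo_eq_of_strictAntiOn_strictMonoOn_strictAntiOn
      (strictAntiOn_nonlinearity_Ioc hC.le) hmono (strictAntiOn_nonlinearity_Ico hC.le)
      (Ioo_subset_Ioc_self hrlow) hMmid (Ioo_subset_Ico_self hrbar) hFrlow rfl hFrbar
end

section
/- Let r : ℝ → ℝ be four times continuously differentiable with bounded fourth derivative and bounded (so that the convolution is defined), and for ε > 0 let K_ε(x) = (1/(2ε)) e^{−|x|/ε}. Then for every x ∈ ℝ, |(K_ε * r)(x) − r(x) − ε^2 r''(x)| ≤ ε^4 · sup_{y∈ℝ} |r''''(y)|; in particular K_ε * r = r + ε^2 r'' + O(ε^3) uniformly as ε → 0. -/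
/-!
Since `K_ε` is even, its moments are `∫ K_ε(t) tᵏ dt = k! εᵏ` for even `k` and `0` for odd `k`.
Integrating the third-order Taylor expansion of `r (x - t)` in `t` against `K_ε` therefore leaves
exactly `r x + ε² r'' x`, while the Lagrange remainder, at most `M₄ t⁴ / 4!`, contributes at most
`M₄ / 4! · ∫ K_ε(t) t⁴ dt = M₄ ε⁴`.
-/

open MeasureTheory Set Real Finset
open scoped Nat

theorem integrable_comp_abs_of_integrableOn_Ioi {E : Type*} [NormedAddCommGroup E] {f : ℝ → E}
    (hf : IntegrableOn f (Ioi 0)) : Integrable fun x => f |x| := by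
  have hIoi : IntegrableOn (fun x => f |x|) (Ioi 0) :=
    hf.congr_fun (fun x hx => by rw [abs_of_pos (mem_Ioi.mp hx)]) measurableSet_Ioi
  have hIic : IntegrableOn (fun x => f |x|) (Iic 0) := by
    have hneg : MeasurableEmbedding fun x : ℝ => -x := (Homeomorph.neg ℝ).measurableEmbedding
    rw [← Measure.map_neg_eq_self (volume : Measure ℝ), hneg.integrableOn_map_iff]
    simp_rw [Function.comp_def, abs_neg, neg_preimage, neg_Iic, neg_zero]
    exact (integrableOn_Ici_iff_integrableOn_Ioi).mpr hIoi
  rw [← integrableOn_univ, ← Iic_union_Ioi (a := (0 : ℝ))]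
  exact hIic.union hIoi

theorem abs_sub_sum_iteratedDeriv_le {f : ℝ → ℝ} {n : ℕ} {M : ℝ} (hf : ContDiff ℝ (n + 1) f)
    (hM : ∀ y, |iteratedDeriv (n + 1) f y| ≤ M) (a b : ℝ) :
    |f b - ∑ k ∈ range (n + 1), iteratedDeriv k f a * (b - a) ^ k / k !|
      ≤ M * |b - a| ^ (n + 1) / (n + 1)! := by
  rcases eq_or_ne a b with rfl | hab
  · simp [sum_range_succ']
  obtain ⟨c, -, hc⟩ := taylor_mean_remainder_lagrange_iteratedDeriv hab hf.contDiffOn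
  have htaylor : taylorWithinEval f n (uIcc a b) a b
      = ∑ k ∈ range (n + 1), iteratedDeriv k f a * (b - a) ^ k / k ! := by
    rw [taylor_within_apply]
    refine sum_congr rfl fun k hk => ?_
    rw [iteratedDerivWithin_eq_iteratedDeriv (uniqueDiffOn_uIcc hab)
      ((hf.of_le (by exact_mod_cast (mem_range.mp hk).le)).contDiffAt) left_mem_uIcc,
      smul_eq_mul]
    ring
  rw [← htaylor, hc, abs_div, abs_mul, abs_pow, Nat.abs_cast]
  gcongr
  exact hM c

section LaplaceKernel

variable {ε : ℝ}

theorem integrableOn_pow_mul_exp_neg_div_Ioi (hε : 0 < ε) (k : ℕ) :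
    IntegrableOn (fun t : ℝ => t ^ k * exp (-t / ε)) (Ioi 0) := by
  refine (integrableOn_rpow_mul_exp_neg_mul_rpow (s := k) (p := 1) (b := 1 / ε)
    (by linarith [(Nat.cast_nonneg k : (0 : ℝ) ≤ k)]) one_pos (by positivity)).congr_fun
    (fun t _ => ?_) measurableSet_Ioi
  simp only [rpow_one, rpow_natCast, neg_div, one_div, neg_mul, inv_mul_eq_div]

theorem integral_pow_mul_exp_neg_div_Ioi (hε : 0 < ε) (k : ℕ) :
    ∫ t in Ioi (0 : ℝ), t ^ k * exp (-t / ε) = k ! * ε ^ (k + 1) := by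
  have h := integral_rpow_mul_exp_neg_mul_Ioi (a := k + 1) (r := 1 / ε) (by positivity)
    (by positivity)
  rw [add_sub_cancel_right, one_div_one_div, Gamma_nat_eq_factorial,
    ← Nat.cast_add_one, rpow_natCast] at h
  rw [mul_comm, ← h]
  refine setIntegral_congr_fun measurableSet_Ioi (fun t _ => ?_)
  simp only [rpow_natCast, neg_div, one_div, inv_mul_eq_div]

noncomputable def laplaceKernel (ε t : ℝ) : ℝ := 1 / (2 * ε) * exp (-|t| / ε)

theorem laplaceKernel_nonneg (hε : 0 ≤ ε) (t : ℝ) : 0 ≤ laplaceKernel ε t := by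
  unfold laplaceKernel; positivity

theorem laplaceKernel_neg (t : ℝ) : laplaceKernel ε (-t) = laplaceKernel ε t := by
  rw [laplaceKernel, abs_neg, laplaceKernel]

theorem continuous_laplaceKernel : Continuous (laplaceKernel ε) := by
  unfold laplaceKernel; fun_prop

theorem laplaceKernel_mul_abs_pow (k : ℕ) (t : ℝ) :
    laplaceKernel ε t * |t| ^ k = 1 / (2 * ε) * (|t| ^ k * exp (-|t| / ε)) := by
  unfold laplaceKernel; ring

theorem integrable_laplaceKernel_mul_abs_pow (hε : 0 < ε) (k : ℕ) :
    Integrable fun t => laplaceKernel ε t * |t| ^ k := by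
  simp_rw [laplaceKernel_mul_abs_pow]
  exact (integrable_comp_abs_of_integrableOn_Ioi
    (integrableOn_pow_mul_exp_neg_div_Ioi hε k)).const_mul _

theorem integral_laplaceKernel_mul_abs_pow (hε : 0 < ε) (k : ℕ) :
    ∫ t, laplaceKernel ε t * |t| ^ k = k ! * ε ^ k := by
  simp_rw [laplaceKernel_mul_abs_pow]
  rw [integral_const_mul, integral_comp_abs (f := fun u => u ^ k * exp (-u / ε)),
    integral_pow_mul_exp_neg_div_Ioi hε k]
  field_simp
  ring

theorem abs_laplaceKernel_mul_le (hε : 0 ≤ ε) {a C t : ℝ} {m : ℕ} (ha : |a| ≤ C * |t| ^ m) :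
    |laplaceKernel ε t * a| ≤ C * (laplaceKernel ε t * |t| ^ m) := by
  rw [abs_mul, abs_of_nonneg (laplaceKernel_nonneg hε t), mul_left_comm]
  exact mul_le_mul_of_nonneg_left ha (laplaceKernel_nonneg hε t)

theorem integrable_laplaceKernel_mul_of_abs_le (hε : 0 < ε) {g : ℝ → ℝ} {C : ℝ} {m : ℕ}
    (hg : AEStronglyMeasurable g) (hbound : ∀ t, |g t| ≤ C * |t| ^ m) :
    Integrable fun t => laplaceKernel ε t * g t :=
  ((integrable_laplaceKernel_mul_abs_pow hε m).const_mul C).mono'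
    (continuous_laplaceKernel.aestronglyMeasurable.mul hg)
    (ae_of_all _ fun t => abs_laplaceKernel_mul_le hε.le (hbound t))

theorem abs_integral_laplaceKernel_mul_le (hε : 0 < ε) {g : ℝ → ℝ} {C : ℝ} {m : ℕ}
    (hbound : ∀ t, |g t| ≤ C * |t| ^ m) :
    |∫ t, laplaceKernel ε t * g t| ≤ C * m ! * ε ^ m :=
  calc |∫ t, laplaceKernel ε t * g t|
      ≤ ∫ t, C * (laplaceKernel ε t * |t| ^ m) :=
        norm_integral_le_of_norm_le (f := fun t => laplaceKernel ε t * g t)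
          ((integrable_laplaceKernel_mul_abs_pow hε m).const_mul C)
          (ae_of_all _ fun t => abs_laplaceKernel_mul_le hε.le (hbound t))
    _ = C * m ! * ε ^ m := by
        rw [integral_const_mul, integral_laplaceKernel_mul_abs_pow hε m, mul_assoc]

theorem integrable_laplaceKernel_mul_pow (hε : 0 < ε) (k : ℕ) :
    Integrable fun t => laplaceKernel ε t * t ^ k :=
  integrable_laplaceKernel_mul_of_abs_le hε (by fun_prop) fun t => by rw [one_mul, abs_pow]

theorem integral_laplaceKernel_mul_pow (hε : 0 < ε) (k : ℕ) :
    ∫ t, laplaceKernel ε t * t ^ k = if Even k then k ! * ε ^ k else 0 := by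
  split_ifs with hk
  · rw [← integral_laplaceKernel_mul_abs_pow hε k]
    simp_rw [hk.pow_abs]
  · have hodd : ∀ t, laplaceKernel ε (-t) * (-t) ^ k = -(laplaceKernel ε t * t ^ k) := fun t => by
      rw [laplaceKernel_neg, (Nat.not_even_iff_odd.mp hk).neg_pow, mul_neg]
    have h := integral_neg_eq_self (fun t => laplaceKernel ε t * t ^ k) volume
    simp only [hodd, integral_neg] at h
    linarith

theorem laplaceKernel_mul_monomial (c : ℝ) (k : ℕ) (t : ℝ) :
    laplaceKernel ε t * (c * (-t) ^ k / k !)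
      = c * (-1) ^ k / k ! * (laplaceKernel ε t * t ^ k) := by
  rw [neg_pow]; ring

theorem integrable_laplaceKernel_mul_sum (hε : 0 < ε) (c : ℕ → ℝ) (m : ℕ) :
    Integrable fun t => laplaceKernel ε t * ∑ k ∈ range m, c k * (-t) ^ k / k ! := by
  simp_rw [mul_sum, laplaceKernel_mul_monomial]
  exact integrable_finsetSum _ fun k _ => (integrable_laplaceKernel_mul_pow hε k).const_mul _

theorem integral_laplaceKernel_mul_sum (hε : 0 < ε) (c : ℕ → ℝ) (m : ℕ) :
    ∫ t, laplaceKernel ε t * ∑ k ∈ range m, c k * (-t) ^ k / k !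
      = ∑ k ∈ range m with Even k, c k * ε ^ k := by
  simp_rw [mul_sum, laplaceKernel_mul_monomial]
  rw [integral_finsetSum _ fun k _ => (integrable_laplaceKernel_mul_pow hε k).const_mul _,
    sum_filter]
  refine sum_congr rfl fun k _ => ?_
  rw [integral_const_mul, integral_laplaceKernel_mul_pow hε k]
  split_ifs with hk
  · rw [hk.neg_one_pow]
    field_simp
  · rw [mul_zero]

theorem abs_integral_laplaceKernel_mul_sub_sum_le {f : ℝ → ℝ} {n : ℕ} {M : ℝ}
    (hf : ContDiff ℝ (n + 1) f) (hM : ∀ y, |iteratedDeriv (n + 1) f y| ≤ M) (hε : 0 < ε)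
    (x : ℝ) :
    |(∫ t, laplaceKernel ε t * f (x - t))
        - ∑ k ∈ range (n + 1) with Even k, iteratedDeriv k f x * ε ^ k| ≤ M * ε ^ (n + 1) := by
  set P : ℝ → ℝ := fun t => ∑ k ∈ range (n + 1), iteratedDeriv k f x * (-t) ^ k / (k ! : ℝ)
  have hremainder : ∀ t, |f (x - t) - P t| ≤ M / (n + 1)! * |t| ^ (n + 1) := fun t => by
    have h := abs_sub_sum_iteratedDeriv_le hf hM x (x - t)
    rwa [sub_sub_cancel_left, abs_neg, mul_div_right_comm] at h
  have hR : Integrable fun t => laplaceKernel ε t * (f (x - t) - P t) :=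
    integrable_laplaceKernel_mul_of_abs_le hε (by fun_prop) hremainder
  have hsplit : ∫ t, laplaceKernel ε t * f (x - t)
      = (∫ t, laplaceKernel ε t * P t) + ∫ t, laplaceKernel ε t * (f (x - t) - P t) := by
    have hP : Integrable fun t => laplaceKernel ε t * P t :=
      integrable_laplaceKernel_mul_sum hε _ _
    rw [← integral_add hP hR]
    simp_rw [← mul_add, add_sub_cancel]
  have hPint : ∫ t, laplaceKernel ε t * P t
      = ∑ k ∈ range (n + 1) with Even k, iteratedDeriv k f x * ε ^ k :=
    integral_laplaceKernel_mul_sum hε _ _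
  rw [hsplit, hPint, add_sub_cancel_left]
  calc _ ≤ M / (n + 1)! * (n + 1)! * ε ^ (n + 1) :=
        abs_integral_laplaceKernel_mul_le hε hremainder
    _ = M * ε ^ (n + 1) := by field_simp

end LaplaceKernel

theorem exponential_kernel_convolution_expansion_general (r : ℝ → ℝ) (hr : ContDiff ℝ 4 r)
    (M₄ : ℝ) (hM₄ : ∀ y, |iteratedDeriv 4 r y| ≤ M₄)
    (ε : ℝ) (hε : 0 < ε) (x : ℝ) :
    |(∫ y : ℝ, 1 / (2 * ε) * Real.exp (-|x - y| / ε) * r y)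
        - r x - ε ^ 2 * iteratedDeriv 2 r x| ≤ ε ^ 4 * M₄ := by
  have hconv : ∫ y : ℝ, 1 / (2 * ε) * Real.exp (-|x - y| / ε) * r y
      = ∫ t, laplaceKernel ε t * r (x - t) := by
    rw [← integral_sub_left_eq_self _ volume x]
    simp only [sub_sub_cancel, laplaceKernel]
  have heven : ∑ k ∈ range 4 with Even k, iteratedDeriv k r x * ε ^ k
      = r x + ε ^ 2 * iteratedDeriv 2 r x := by
    simp [sum_filter, sum_range_succ, mul_comm, show ¬Even 3 by decide]
  rw [hconv, sub_sub, ← heven, mul_comm]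
  exact abs_integral_laplaceKernel_mul_sub_sum_le (n := 3) hr hM₄ hε x

/-- **Local expansion of the exponential convolution.** Let `r : ℝ → ℝ` be `C⁴`, bounded and
with bounded fourth derivative, and let `K_ε(x) = (1/(2ε)) e^{-|x|/ε}`. Then for every `x`,
`|(K_ε * r)(x) - r(x) - ε² r''(x)| ≤ ε⁴ · sup |r''''|`; in particular
`K_ε * r = r + ε² r'' + O(ε³)` uniformly as `ε → 0`. -/
theorem exponential_kernel_convolution_expansion (r : ℝ → ℝ) (hr : ContDiff ℝ 4 r)
    (Mb : ℝ) (hMb : ∀ x, |r x| ≤ Mb)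
    (M₄ : ℝ) (hM₄ : ∀ y, |iteratedDeriv 4 r y| ≤ M₄)
    (ε : ℝ) (hε : 0 < ε) (x : ℝ) :
    |(∫ y : ℝ, 1 / (2 * ε) * Real.exp (-|x - y| / ε) * r y)
        - r x - ε ^ 2 * iteratedDeriv 2 r x| ≤ ε ^ 4 * M₄ :=
  exponential_kernel_convolution_expansion_general r hr M₄ hM₄ ε hε x
end

section
/- Let r_0 ∈ (0,1), C_rr > 0 and ε > 0, set a = C_rr (1 − r_0) r_0, and define f : ℝ → ℝ by f(ξ) = −ξ^2 ( 1 − a/(4π^2 ε^2 ξ^2 + 1) ). If a > 1, then ξ_u = √(√a − 1)/(2πε) satisfies f'(ξ_u) = 0, f(ξ_u) > 0, and f(ξ_u) ≥ f(ξ) for all ξ ∈ ℝ; i.e. ξ_u is the dominant (most unstable) wavenumber of the linearized single-species PDE model. -/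
/-!
With `t = b ξ²` and `a = s²`, the growth rate satisfies the identity
`(s - 1)² - b f(ξ) = (t - (s - 1))² / (t + 1)`, so `f ≤ (s - 1)² / b` with equality exactly when
`b ξ² = s - 1`. For `b = 4π²ε²` this is `ξ = ±ξ_u`; the maximum is positive once `s > 1`, and the
derivative vanishes there by Fermat's theorem.
-/

open scoped Real

/-- In the paper's notation `a = C_rr (1 - r₀) r₀` and `b = 4π²ε²`, so that `1 / (b ξ² + 1) = K̂₂(ξ)`. -/
noncomputable def growthRate (a b ξ : ℝ) : ℝ := -ξ ^ 2 * (1 - a / (b * ξ ^ 2 + 1))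

section

variable {a b : ℝ}

theorem sq_sub_mul_growthRate (s : ℝ) (hb : 0 ≤ b) (ξ : ℝ) :
    (s - 1) ^ 2 - b * growthRate (s ^ 2) b ξ = (b * ξ ^ 2 - (s - 1)) ^ 2 / (b * ξ ^ 2 + 1) := by
  have hden : b * ξ ^ 2 + 1 ≠ 0 := by positivity
  unfold growthRate
  field_simp
  ring

theorem mul_growthRate_le (ha : 0 ≤ a) (hb : 0 ≤ b) (ξ : ℝ) :
    b * growthRate a b ξ ≤ (√a - 1) ^ 2 := by
  have key := sq_sub_mul_growthRate √a hb ξ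
  rw [Real.sq_sqrt ha] at key
  have : 0 ≤ (b * ξ ^ 2 - (√a - 1)) ^ 2 / (b * ξ ^ 2 + 1) := by positivity
  linarith

theorem mul_growthRate_of_mul_sq_eq (ha : 0 ≤ a) (hb : 0 ≤ b) {ξ₀ : ℝ}
    (hξ₀ : b * ξ₀ ^ 2 = √a - 1) : b * growthRate a b ξ₀ = (√a - 1) ^ 2 := by
  have key := sq_sub_mul_growthRate √a hb ξ₀
  rw [Real.sq_sqrt ha, hξ₀, sub_self, zero_pow two_ne_zero, zero_div] at key
  linarith

theorem growthRate_le_of_mul_sq_eq (ha : 0 ≤ a) (hb : 0 < b) {ξ₀ : ℝ}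
    (hξ₀ : b * ξ₀ ^ 2 = √a - 1) (ξ : ℝ) : growthRate a b ξ ≤ growthRate a b ξ₀ := by
  refine le_of_mul_le_mul_left ?_ hb
  rw [mul_growthRate_of_mul_sq_eq ha hb.le hξ₀]
  exact mul_growthRate_le ha hb.le ξ

theorem growthRate_pos_of_mul_sq_eq (ha : 1 < a) (hb : 0 < b) {ξ₀ : ℝ}
    (hξ₀ : b * ξ₀ ^ 2 = √a - 1) : 0 < growthRate a b ξ₀ := by
  have hs : 1 < √a := Real.lt_sqrt_of_sq_lt (by linarith)
  refine pos_of_mul_pos_right ?_ hb.le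
  rw [mul_growthRate_of_mul_sq_eq (by linarith) hb.le hξ₀]
  nlinarith

theorem hasDerivAt_growthRate_of_isLocalMax (hb : 0 ≤ b) {ξ₀ : ℝ}
    (hmax : IsLocalMax (growthRate a b) ξ₀) : HasDerivAt (growthRate a b) 0 ξ₀ := by
  have hden : b * ξ₀ ^ 2 + 1 ≠ 0 := by positivity
  have hdiff : DifferentiableAt ℝ (growthRate a b) ξ₀ := by
    unfold growthRate
    fun_prop (disch := exact hden)
  simpa only [hmax.deriv_eq_zero] using hdiff.hasDerivAt

end

theorem dominant_unstable_wavenumber_general (r₀ C_rr ε : ℝ)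
    (hε : 0 < ε)
    (ha : 1 < C_rr * (1 - r₀) * r₀) :
    let a : ℝ := C_rr * (1 - r₀) * r₀
    let f : ℝ → ℝ := fun ξ => -ξ ^ 2 * (1 - a / (4 * π ^ 2 * ε ^ 2 * ξ ^ 2 + 1))
    let ξu : ℝ := Real.sqrt (Real.sqrt a - 1) / (2 * π * ε)
    HasDerivAt f 0 ξu ∧ 0 < f ξu ∧ ∀ ξ, f ξ ≤ f ξu := by
  intro a f ξu
  have hb : 0 < 4 * π ^ 2 * ε ^ 2 := by positivity
  have hs : 0 ≤ √a - 1 := by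
    rw [sub_nonneg, Real.one_le_sqrt]
    exact ha.le
  have hξu : 4 * π ^ 2 * ε ^ 2 * ξu ^ 2 = √a - 1 := by
    have : 2 * π * ε ≠ 0 := by positivity
    simp only [ξu, div_pow, Real.sq_sqrt hs]
    field_simp
    ring
  have hmax : ∀ ξ, f ξ ≤ f ξu := growthRate_le_of_mul_sq_eq (by linarith) hb hξu
  exact ⟨hasDerivAt_growthRate_of_isLocalMax hb.le (Filter.Eventually.of_forall hmax),
    growthRate_pos_of_mul_sq_eq ha hb hξu, hmax⟩

/-- **The dominant unstable wavenumber.** Let `r₀ ∈ (0,1)`, `C_rr > 0`, `ε > 0`, and set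
`a = C_rr (1 - r₀) r₀`. If `a > 1`, then the growth rate
`f(ξ) = -ξ² (1 - a/(4π²ε²ξ² + 1))` of the linearized single-species model attains at
`ξ_u = √(√a - 1)/(2πε)` a critical point (`f'(ξ_u) = 0`) with `f(ξ_u) > 0` and
`f(ξ) ≤ f(ξ_u)` for all `ξ`: `ξ_u` is the dominant (most unstable) wavenumber. -/
theorem dominant_unstable_wavenumber (r₀ C_rr ε : ℝ)
    (hr₀ : 0 < r₀) (hr₁ : r₀ < 1) (hC : 0 < C_rr) (hε : 0 < ε)
    (ha : 1 < C_rr * (1 - r₀) * r₀) :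
    let a : ℝ := C_rr * (1 - r₀) * r₀
    let f : ℝ → ℝ := fun ξ => -ξ ^ 2 * (1 - a / (4 * π ^ 2 * ε ^ 2 * ξ ^ 2 + 1))
    let ξu : ℝ := Real.sqrt (Real.sqrt a - 1) / (2 * π * ε)
    HasDerivAt f 0 ξu ∧ 0 < f ξu ∧ ∀ ξ, f ξ ≤ f ξu :=
  dominant_unstable_wavenumber_general r₀ C_rr ε hε ha
end
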